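/- arXiv:math/0511508 — 6 statements merged into one kernel-verified Lean document; each statement's English description precedes it below -/
import Mathlib

section
/- Suppose (T, Z) is a pair of random elements with T > 0 a.s., Z taking values in ℝ^d with law μ, and for every t ≥ 0 and every Borel set B ⊆ ℝ^d, P(T ≤ t, Z ∈ B) = ∫_B G(Γ(t) e^{θᵀz}) μ(dz). Then the random variable ε := log Γ(T) + θᵀZ is independent of Z, and exp(ε) has distribution function G, i.e. P(exp(ε) ≤ x) = G(x) for all x ≥ 0. Equivalently, the scale transformation model is the linear regression model log Γ(T) = −θᵀZ + ε with Z and ε independent. -/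
/-!
Put `W = Γ(T) e^{θᵀZ}`, so that `ε = log W`. For `x ≥ 0` the event `{W ≤ x}` is
`{T ≤ τ(Z)}` with the threshold `τ(z) = Γ⁻¹(x e^{-θᵀz})`, and along this threshold the
conditional distribution function `G(Γ(τ(z)) e^{θᵀz}) = G(x)` does not depend on `z`.
The hypothesis gives `P(T ≤ t, Z ∈ B)` only for constant thresholds `t`; splitting `B`
along the level sets of `τ` extends it to countably-valued thresholds, and approximating `τ`
from above (right-continuity of the conditional distribution function and dominated
convergence) to `τ` itself. Hence `P(W ≤ x, Z ∈ B) = G(x) P(Z ∈ B)`: `W` has distribution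
function `G` and is independent of `Z`, and so is `ε = log W`.
-/

open Matrix Set MeasureTheory Function Filter Topology ProbabilityTheory
open scoped ENNReal

theorem StrictMonoOn.monotoneOn_invFunOn {α β : Type*} [LinearOrder α] [Nonempty α] [Preorder β]
    {f : α → β} {s : Set α} {t : Set β} (hf : StrictMonoOn f s) (hst : SurjOn f s t) :
    MonotoneOn (invFunOn f s) t := by
  intro y₁ hy₁ y₂ hy₂ hy
  obtain ⟨hmem₁, hf₁⟩ := invFunOn_pos (hst hy₁)
  obtain ⟨hmem₂, hf₂⟩ := invFunOn_pos (hst hy₂)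
  rwa [← hf.le_iff_le hmem₁ hmem₂, hf₁, hf₂]

theorem eventually_le_iff_of_tendsto_nhdsWithin_Ici {α ι : Type*} [LinearOrder α]
    [TopologicalSpace α] [OrderTopology α] {l : Filter ι} {u : ι → α} {a : α}
    (hu : Tendsto u l (𝓝[≥] a)) (x : α) : ∀ᶠ i in l, x ≤ u i ↔ x ≤ a := by
  rcases le_or_gt x a with hxa | hax
  · filter_upwards [hu self_mem_nhdsWithin] with i hi
    exact iff_of_true (hxa.trans hi) hxa
  · filter_upwards [tendsto_nhds_of_tendsto_nhdsWithin hu (Iio_mem_nhds hax)] with i hi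
    exact iff_of_false (not_le.2 hi) (not_le.2 hax)

theorem indepFun_of_measure_preimage_Iic_inter {Ω α β : Type*} [MeasurableSpace Ω]
    [LinearOrder α] [TopologicalSpace α] [OrderTopology α] [SecondCountableTopology α]
    [MeasurableSpace α] [BorelSpace α] [MeasurableSpace β]
    {P : Measure Ω} [IsProbabilityMeasure P] {X : Ω → α} {Y : Ω → β}
    (hX : Measurable X) (hY : Measurable Y)
    (h : ∀ s t, MeasurableSet t → P (X ⁻¹' Iic s ∩ Y ⁻¹' t) = P (X ⁻¹' Iic s) * P (Y ⁻¹' t)) :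
    IndepFun X Y P := by
  rw [IndepFun_iff_Indep]
  refine IndepSets.indep hX.comap_le hY.comap_le (IsPiSystem.comap isPiSystem_Iic X)
    (MeasurableSpace.isPiSystem_measurableSet.comap Y) ?_
    (MeasurableSpace.comap_eq_generateFrom _ _) ?_
  · rw [BorelSpace.measurable_eq (α := α), borel_eq_generateFrom_Iic,
      MeasurableSpace.comap_generateFrom]
    rfl
  · rw [IndepSets_iff]
    rintro _ _ ⟨_, ⟨s, rfl⟩, rfl⟩ ⟨t, ht, rfl⟩
    exact h s t ht

noncomputable def ceilGrid (n : ℕ) (x : ℝ) : ℝ := ⌈x * (n + 1)⌉₊ / (n + 1)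

lemma ceilGrid_nonneg (n : ℕ) (x : ℝ) : 0 ≤ ceilGrid n x := by
  unfold ceilGrid; positivity

lemma le_ceilGrid (n : ℕ) (x : ℝ) : x ≤ ceilGrid n x :=
  (le_div_iff₀ n.cast_add_one_pos).2 (Nat.le_ceil _)

lemma ceilGrid_le_add (n : ℕ) {x : ℝ} (hx : 0 ≤ x) : ceilGrid n x ≤ x + 1 / (n + 1) := by
  have hn : (0 : ℝ) < n + 1 := n.cast_add_one_pos
  rw [ceilGrid, div_le_iff₀ hn, add_mul, one_div_mul_cancel hn.ne']
  exact (Nat.ceil_lt_add_one (mul_nonneg hx hn.le)).le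

lemma measurable_ceilGrid (n : ℕ) : Measurable (ceilGrid n) := by
  unfold ceilGrid; fun_prop

lemma countable_range_ceilGrid (n : ℕ) : (range (ceilGrid n)).Countable :=
  (countable_range fun k : ℕ => (k : ℝ) / (n + 1)).mono <| by
    rintro _ ⟨x, rfl⟩
    exact ⟨_, rfl⟩

lemma tendsto_ceilGrid {x : ℝ} (hx : 0 ≤ x) :
    Tendsto (fun n => ceilGrid n x) atTop (𝓝[≥] x) := by
  refine tendsto_nhdsWithin_of_tendsto_nhds_of_eventually_within _ ?_
    (Eventually.of_forall fun n => le_ceilGrid n x)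
  have hlim : Tendsto (fun n : ℕ => x + 1 / ((n : ℝ) + 1)) atTop (𝓝 x) := by
    simpa using tendsto_const_nhds.add (tendsto_one_div_add_atTop_nhds_zero_nat (𝕜 := ℝ))
  exact tendsto_of_tendsto_of_tendsto_of_le_of_le tendsto_const_nhds hlim (le_ceilGrid · x)
    (fun n => ceilGrid_le_add n hx)

section LawBelowThreshold

variable {Ω E : Type*} [MeasurableSpace Ω] [MeasurableSpace E] {P : Measure Ω} {μ : Measure E}
  {T : Ω → ℝ} {Z : Ω → E} {F : ℝ → E → ℝ≥0∞}

theorem measure_le_comp_inter_of_countable_range (hT : Measurable T) (hZ : Measurable Z)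
    (hlaw : ∀ t, 0 ≤ t → ∀ B, MeasurableSet B →
      P {ω | T ω ≤ t ∧ Z ω ∈ B} = ∫⁻ z in B, F t z ∂μ)
    {τ : E → ℝ} (hτ : Measurable τ) (hτ_range : (range τ).Countable) (hτ_nonneg : ∀ z, 0 ≤ τ z)
    {B : Set E} (hB : MeasurableSet B) :
    P {ω | T ω ≤ τ (Z ω) ∧ Z ω ∈ B} = ∫⁻ z in B, F (τ z) z ∂μ := by
  have := hτ_range.to_subtype
  let A : range τ → Set E := fun s => B ∩ τ ⁻¹' {s.1}
  have hA : ∀ s, MeasurableSet (A s) := fun s => hB.inter (hτ (measurableSet_singleton _))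
  have hA_disj : Pairwise (Disjoint on A) := fun s s' hss' =>
    disjoint_left.2 fun z hz hz' => hss' (Subtype.ext (hz.2.symm.trans hz'.2))
  have hB_eq : B = ⋃ s, A s := by
    ext z
    simp [A]
  have hset : {ω | T ω ≤ τ (Z ω) ∧ Z ω ∈ B} = ⋃ s : range τ, {ω | T ω ≤ s ∧ Z ω ∈ A s} := by
    ext ω
    simp only [A, mem_ofPred_eq, mem_iUnion, mem_inter_iff, mem_preimage, mem_singleton_iff,
      Subtype.exists]
    exact ⟨fun h => ⟨_, ⟨Z ω, rfl⟩, h.1, h.2, rfl⟩,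
      fun ⟨_, _, h₁, h₂, h₃⟩ => ⟨h₁.trans_eq h₃.symm, h₂⟩⟩
  calc P {ω | T ω ≤ τ (Z ω) ∧ Z ω ∈ B}
      = ∑' s : range τ, P {ω | T ω ≤ s ∧ Z ω ∈ A s} := by
        rw [hset]
        refine measure_iUnion (fun s s' hss' => ?_) fun s =>
          (measurableSet_le hT measurable_const).inter (hZ (hA s))
        exact ((hA_disj hss').preimage Z).mono (fun _ hω => hω.2) fun _ hω => hω.2
    _ = ∑' s : range τ, ∫⁻ z in A s, F (τ z) z ∂μ := by
        refine tsum_congr fun ⟨s, z₀, hz₀⟩ => ?_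
        rw [hlaw s (hz₀ ▸ hτ_nonneg z₀) _ (hA _)]
        exact setLIntegral_congr_fun (hA _) fun z hz => by rw [show τ z = s from hz.2]
    _ = ∫⁻ z in B, F (τ z) z ∂μ := by
        rw [← lintegral_iUnion hA hA_disj, ← hB_eq]

theorem measure_le_comp_inter [IsFiniteMeasure P] [IsFiniteMeasure μ]
    (hT : Measurable T) (hZ : Measurable Z)
    (hlaw : ∀ t, 0 ≤ t → ∀ B, MeasurableSet B →
      P {ω | T ω ≤ t ∧ Z ω ∈ B} = ∫⁻ z in B, F t z ∂μ)
    (hF : Measurable (uncurry F)) (hF_le : ∀ t z, F t z ≤ 1)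
    (hF_cont : ∀ t z, ContinuousWithinAt (F · z) (Ici t) t)
    {τ : E → ℝ} (hτ : Measurable τ) (hτ_nonneg : ∀ z, 0 ≤ τ z)
    {B : Set E} (hB : MeasurableSet B) :
    P {ω | T ω ≤ τ (Z ω) ∧ Z ω ∈ B} = ∫⁻ z in B, F (τ z) z ∂μ := by
  let τn : ℕ → E → ℝ := fun n z => ceilGrid n (τ z)
  have hτn : ∀ n, Measurable (τn n) := fun n => (measurable_ceilGrid n).comp hτ
  have hτn_lim : ∀ z, Tendsto (τn · z) atTop (𝓝[≥] τ z) := fun z =>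
    tendsto_ceilGrid (hτ_nonneg z)
  have hτn_law : ∀ n, P {ω | T ω ≤ τn n (Z ω) ∧ Z ω ∈ B} = ∫⁻ z in B, F (τn n z) z ∂μ :=
    fun n => measure_le_comp_inter_of_countable_range hT hZ hlaw (hτn n)
      ((countable_range_ceilGrid n).mono (range_comp_subset_range τ (ceilGrid n)))
      (fun z => ceilGrid_nonneg n _) hB
  have hlhs : Tendsto (fun n => P {ω | T ω ≤ τn n (Z ω) ∧ Z ω ∈ B}) atTop
      (𝓝 (P {ω | T ω ≤ τ (Z ω) ∧ Z ω ∈ B})) :=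
    tendsto_measure_of_tendsto_indicator_of_isFiniteMeasure atTop P
      (fun n => (measurableSet_le hT ((hτn n).comp hZ)).inter (hZ hB)) fun ω => by
        filter_upwards [eventually_le_iff_of_tendsto_nhdsWithin_Ici (hτn_lim (Z ω)) (T ω)]
          with n hn
        exact and_congr_left' hn
  have hrhs : Tendsto (fun n => ∫⁻ z in B, F (τn n z) z ∂μ) atTop
      (𝓝 (∫⁻ z in B, F (τ z) z ∂μ)) :=
    tendsto_lintegral_of_dominated_convergence 1
      (fun n => hF.comp ((hτn n).prodMk measurable_id)) (fun n => ae_of_all _ fun z => hF_le _ z)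
      (by simp) (ae_of_all _ fun z => (hF_cont _ z).tendsto.comp (hτn_lim z))
  exact tendsto_nhds_unique (hlhs.congr hτn_law) hrhs

end LawBelowThreshold

section ScaleModel

variable {d : ℕ} {θ : Fin d → ℝ} {Γ G : ℝ → ℝ}

/-- `Γ(t) e^{θᵀz}`, continued to `t < 0` by its value at `t = 0` so that it is continuous on the
whole plane while `Γ` is only controlled on `[0, ∞)`. -/
noncomputable def scaledTime (θ : Fin d → ℝ) (Γ : ℝ → ℝ) (t : ℝ) (z : Fin d → ℝ) : ℝ :=
  Γ (max t 0) * Real.exp (θ ⬝ᵥ z)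

lemma scaledTime_of_nonneg {t : ℝ} (ht : 0 ≤ t) (z : Fin d → ℝ) :
    scaledTime θ Γ t z = Γ t * Real.exp (θ ⬝ᵥ z) := by
  rw [scaledTime, max_eq_left ht]

lemma scaledTime_nonneg (hΓ : MapsTo Γ (Ici 0) (Ici 0)) (t : ℝ) (z : Fin d → ℝ) :
    0 ≤ scaledTime θ Γ t z :=
  mul_nonneg (hΓ (le_max_right t 0)) (Real.exp_pos _).le

lemma continuous_scaledTime (hΓcont : ContinuousOn Γ (Ici 0)) :
    Continuous (uncurry (scaledTime θ Γ)) :=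
  (hΓcont.comp_continuous (continuous_fst.max continuous_const) fun p => le_max_right p.1 0).mul
    (Real.continuous_exp.comp (continuous_const.dotProduct continuous_snd))

theorem measure_le_inter_eq_lintegral_scaledTime (hΓ : MapsTo Γ (Ici 0) (Ici 0))
    (hΓcont : ContinuousOn Γ (Ici 0)) (hGcont : ContinuousOn G (Ici 0))
    (hGcod : ∀ x ∈ Ici (0:ℝ), G x ∈ Ico (0:ℝ) 1)
    {Ω : Type*} [MeasurableSpace Ω] {P : Measure Ω} [IsProbabilityMeasure P]
    {T : Ω → ℝ} {Z : Ω → Fin d → ℝ} (hZ : Measurable Z)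
    (hlaw : ∀ t : ℝ, 0 ≤ t → ∀ B : Set (Fin d → ℝ), MeasurableSet B →
      P {ω | T ω ≤ t ∧ Z ω ∈ B} =
        ENNReal.ofReal (∫ z in B, G (Γ t * Real.exp (θ ⬝ᵥ z)) ∂(P.map Z)))
    {t : ℝ} (ht : 0 ≤ t) {B : Set (Fin d → ℝ)} (hB : MeasurableSet B) :
    P {ω | T ω ≤ t ∧ Z ω ∈ B} =
      ∫⁻ z in B, ENNReal.ofReal (G (scaledTime θ Γ t z)) ∂(P.map Z) := by
  have : IsProbabilityMeasure (P.map Z) := Measure.isProbabilityMeasure_map hZ.aemeasurable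
  have hG_Ico : ∀ z, G (scaledTime θ Γ t z) ∈ Ico 0 1 := fun z =>
    hGcod _ (scaledTime_nonneg hΓ t z)
  have hG_cont : Continuous fun z => G (scaledTime θ Γ t z) :=
    hGcont.comp_continuous ((continuous_scaledTime hΓcont).comp (Continuous.prodMk_right t))
      fun z => scaledTime_nonneg hΓ t z
  rw [hlaw t ht B hB,
    ← integral_congr_ae (ae_of_all _ fun z => congrArg G (scaledTime_of_nonneg ht z)),
    ofReal_integral_eq_lintegral_ofReal]
  · refine Integrable.of_bound hG_cont.aestronglyMeasurable 1 (ae_of_all _ fun z => ?_)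
    rw [Real.norm_of_nonneg (hG_Ico z).1]
    exact (hG_Ico z).2.le
  · exact ae_of_all _ fun z => (hG_Ico z).1

theorem measure_scaledTime_le_inter_preimage (hΓmono : StrictMonoOn Γ (Ici 0))
    (hΓcont : ContinuousOn Γ (Ici 0)) (hΓbij : BijOn Γ (Ici 0) (Ici 0))
    (hGcont : ContinuousOn G (Ici 0)) (hGcod : ∀ x ∈ Ici (0:ℝ), G x ∈ Ico (0:ℝ) 1)
    {Ω : Type*} [MeasurableSpace Ω] {P : Measure Ω} [IsProbabilityMeasure P]
    {T : Ω → ℝ} {Z : Ω → Fin d → ℝ} (hT : Measurable T) (hZ : Measurable Z)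
    (hlaw : ∀ t : ℝ, 0 ≤ t → ∀ B : Set (Fin d → ℝ), MeasurableSet B →
      P {ω | T ω ≤ t ∧ Z ω ∈ B} =
        ENNReal.ofReal (∫ z in B, G (Γ t * Real.exp (θ ⬝ᵥ z)) ∂(P.map Z)))
    {x : ℝ} (hx : 0 ≤ x) {B : Set (Fin d → ℝ)} (hB : MeasurableSet B) :
    P ((fun ω => scaledTime θ Γ (T ω) (Z ω)) ⁻¹' Iic x ∩ Z ⁻¹' B) =
      ENNReal.ofReal (G x) * P (Z ⁻¹' B) := by
  have : IsProbabilityMeasure (P.map Z) := Measure.isProbabilityMeasure_map hZ.aemeasurable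
  have hF : Continuous fun p : ℝ × (Fin d → ℝ) => G (scaledTime θ Γ p.1 p.2) :=
    hGcont.comp_continuous (continuous_scaledTime hΓcont) fun p =>
      scaledTime_nonneg hΓbij.mapsTo p.1 p.2
  let Γinv : ℝ → ℝ := fun y => invFunOn Γ (Ici 0) (max y 0)
  have hΓinv_mono : Monotone Γinv := fun y₁ y₂ hy =>
    hΓmono.monotoneOn_invFunOn hΓbij.surjOn (le_max_right y₁ 0) (le_max_right y₂ 0)
      (max_le_max_right 0 hy)
  let τ : (Fin d → ℝ) → ℝ := fun z => Γinv (x * Real.exp (-(θ ⬝ᵥ z)))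
  have hτ : Measurable τ := hΓinv_mono.measurable.comp (by fun_prop)
  have hτ_spec : ∀ z, 0 ≤ τ z ∧ Γ (τ z) * Real.exp (θ ⬝ᵥ z) = x := fun z => by
    have hy : 0 ≤ x * Real.exp (-(θ ⬝ᵥ z)) := mul_nonneg hx (Real.exp_pos _).le
    obtain ⟨hτ_mem, hΓτ⟩ := invFunOn_pos (hΓbij.surjOn hy)
    refine ⟨by simpa [τ, Γinv, max_eq_left hy] using hτ_mem, ?_⟩
    simp only [τ, Γinv, max_eq_left hy, hΓτ, mul_assoc, ← Real.exp_add, neg_add_cancel,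
      Real.exp_zero, mul_one]
  have hset : (fun ω => scaledTime θ Γ (T ω) (Z ω)) ⁻¹' Iic x ∩ Z ⁻¹' B =
      {ω | T ω ≤ τ (Z ω) ∧ Z ω ∈ B} := by
    ext ω
    obtain ⟨hτ_nonneg, hΓτ⟩ := hτ_spec (Z ω)
    simp only [mem_inter_iff, mem_preimage, mem_Iic, mem_ofPred_eq, scaledTime]
    rw [← hΓτ, mul_le_mul_iff_left₀ (Real.exp_pos _),
      hΓmono.le_iff_le (mem_Ici.2 (le_max_right _ 0)) hτ_nonneg, max_le_iff,
      and_iff_left hτ_nonneg]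
  rw [hset, measure_le_comp_inter hT hZ
    (fun t ht B hB => measure_le_inter_eq_lintegral_scaledTime hΓbij.mapsTo hΓcont hGcont hGcod
      hZ hlaw ht hB)
    (ENNReal.measurable_ofReal.comp hF.measurable)
    (fun t z => ENNReal.ofReal_le_one.2 (hGcod _ (scaledTime_nonneg hΓbij.mapsTo t z)).2.le)
    (fun t z => (ENNReal.continuous_ofReal.comp
      (hF.comp (Continuous.prodMk_left z))).continuousWithinAt)
    hτ (fun z => (hτ_spec z).1) hB]
  simp only [scaledTime_of_nonneg (hτ_spec _).1, (hτ_spec _).2]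
  rw [setLIntegral_const, Measure.map_apply hZ hB]

end ScaleModel

theorem stmt_4_general
    (d : ℕ) (θ : Fin d → ℝ) (Γ G : ℝ → ℝ)
    (hΓmono : StrictMonoOn Γ (Ici 0))
    (hΓcont : ContinuousOn Γ (Ici 0))
    (hΓbij : BijOn Γ (Ici 0) (Ici 0))
    (hGcont : ContinuousOn G (Ici 0))
    (hGcod : ∀ x ∈ Ici (0:ℝ), G x ∈ Ico (0:ℝ) 1)
    {Ω : Type*} [MeasurableSpace Ω] (P : Measure Ω) [IsProbabilityMeasure P]
    (T : Ω → ℝ) (Z : Ω → Fin d → ℝ)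
    (hT : Measurable T) (hZ : Measurable Z)
    (hTpos : ∀ᵐ ω ∂P, 0 < T ω)
    (hlaw : ∀ t : ℝ, 0 ≤ t → ∀ B : Set (Fin d → ℝ), MeasurableSet B →
      P {ω | T ω ≤ t ∧ Z ω ∈ B} =
        ENNReal.ofReal (∫ z in B, G (Γ t * Real.exp (θ ⬝ᵥ z)) ∂(P.map Z))) :
    ProbabilityTheory.IndepFun (fun ω => Real.log (Γ (T ω)) + θ ⬝ᵥ Z ω) Z P ∧
      ∀ x : ℝ, 0 ≤ x →
        P {ω | Real.exp (Real.log (Γ (T ω)) + θ ⬝ᵥ Z ω) ≤ x} = ENNReal.ofReal (G x) := by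
  set W : Ω → ℝ := fun ω => scaledTime θ Γ (T ω) (Z ω)
  have hW_law : ∀ x, 0 ≤ x → ∀ B, MeasurableSet B →
      P (W ⁻¹' Iic x ∩ Z ⁻¹' B) = ENNReal.ofReal (G x) * P (Z ⁻¹' B) := fun x hx B hB =>
    measure_scaledTime_le_inter_preimage hΓmono hΓcont hΓbij hGcont hGcod hT hZ hlaw hx hB
  have hW_cdf : ∀ x, 0 ≤ x → P (W ⁻¹' Iic x) = ENNReal.ofReal (G x) := fun x hx => by
    simpa using hW_law x hx univ MeasurableSet.univ
  have hexp : ∀ᵐ ω ∂P, Real.exp (Real.log (Γ (T ω)) + θ ⬝ᵥ Z ω) = W ω := by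
    filter_upwards [hTpos] with ω hω
    have hΓT : 0 < Γ (T ω) := (hΓbij.mapsTo self_mem_Ici).trans_lt (hΓmono self_mem_Ici hω.le hω)
    rw [Real.exp_add, Real.exp_log hΓT]
    exact (scaledTime_of_nonneg hω.le _).symm
  refine ⟨?_, fun x hx => ?_⟩
  · have hW : Measurable W :=
      (continuous_scaledTime hΓcont).measurable.comp (hT.prodMk hZ)
    have hWZ : IndepFun W Z P := indepFun_of_measure_preimage_Iic_inter hW hZ fun s B hB => by
      rcases lt_or_ge s 0 with hs | hs
      · have hempty : W ⁻¹' Iic s = ∅ := eq_empty_of_forall_notMem fun ω hω =>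
          (scaledTime_nonneg hΓbij.mapsTo (T ω) (Z ω)).not_gt (lt_of_le_of_lt hω hs)
        simp [hempty]
      · rw [hW_law s hs B hB, hW_cdf s hs]
    exact (hWZ.comp Real.measurable_log measurable_id).congr
      (hexp.mono fun ω h => by rw [Function.comp_apply, ← h, Real.log_exp]) .rfl
  · rw [← hW_cdf x hx]
    exact measure_congr (eventuallyEq_set.2 (hexp.mono fun ω h => by simp [h]))

/-- Suppose `(T, Z)` is a pair of random elements with `T > 0` a.s., `Z`
taking values in `ℝ^d` with law `μ`, and for every `t ≥ 0` and every Borel set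
`B ⊆ ℝ^d`, `P(T ≤ t, Z ∈ B) = ∫_B G(Γ(t) e^{θᵀz}) μ(dz)`. Then the random variable
`ε := log Γ(T) + θᵀZ` is independent of `Z`, and `exp(ε)` has distribution function
`G`, i.e. `P(exp(ε) ≤ x) = G(x)` for all `x ≥ 0`. Equivalently, the scale
transformation model is the linear regression model `log Γ(T) = −θᵀZ + ε` with
`Z` and `ε` independent. -/
theorem stmt_4
    (d : ℕ) (θ : Fin d → ℝ) (Γ G : ℝ → ℝ)
    (hΓ0 : Γ 0 = 0)
    (hΓmono : StrictMonoOn Γ (Ici 0))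
    (hΓcont : ContinuousOn Γ (Ici 0))
    (hΓbij : BijOn Γ (Ici 0) (Ici 0))
    (hG0 : G 0 = 0)
    (hGmono : StrictMonoOn G (Ici 0))
    (hGcont : ContinuousOn G (Ici 0))
    (hGcod : ∀ x ∈ Ici (0:ℝ), G x ∈ Ico (0:ℝ) 1)
    (hGlim : Filter.Tendsto G Filter.atTop (nhds 1))
    {Ω : Type*} [MeasurableSpace Ω] (P : Measure Ω) [IsProbabilityMeasure P]
    (T : Ω → ℝ) (Z : Ω → Fin d → ℝ)
    (hT : Measurable T) (hZ : Measurable Z)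
    (hTpos : ∀ᵐ ω ∂P, 0 < T ω)
    (hlaw : ∀ t : ℝ, 0 ≤ t → ∀ B : Set (Fin d → ℝ), MeasurableSet B →
      P {ω | T ω ≤ t ∧ Z ω ∈ B} =
        ENNReal.ofReal (∫ z in B, G (Γ t * Real.exp (θ ⬝ᵥ z)) ∂(P.map Z))) :
    ProbabilityTheory.IndepFun (fun ω => Real.log (Γ (T ω)) + θ ⬝ᵥ Z ω) Z P ∧
      ∀ x : ℝ, 0 ≤ x →
        P {ω | Real.exp (Real.log (Γ (T ω)) + θ ⬝ᵥ Z ω) ≤ x} = ENNReal.ofReal (G x) :=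
  stmt_4_general d θ Γ G hΓmono hΓcont hΓbij hGcont hGcod P T Z hT hZ hTpos hlaw
end

section
/- Let θ₁ ∈ ℝ, v₁, v₂ ∈ ℝ, ξ : ℝ → ℝ, and let Γ : [0,∞) → [0,∞) be a continuous nondecreasing function with Γ(0) = 0 and Γ(x) → ∞ as x → ∞. Define the hazard ratio function r(x) = e^{−θ₁(v₁−v₂)} · (1 + e^{θ₁v₁+ξ(v₁)} Γ(x)) / (1 + e^{θ₁v₂+ξ(v₂)} Γ(x)) for x ≥ 0. Then: (i) r(0) = e^{−θ₁(v₁−v₂)}; (ii) lim_{x→∞} r(x) = e^{ξ(v₁)−ξ(v₂)}; (iii) r is nondecreasing on [0,∞) if and only if θ₁(v₁−v₂) ≥ ξ(v₂)−ξ(v₁), and nonincreasing if and only if θ₁(v₁−v₂) ≤ ξ(v₂)−ξ(v₁). -/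
open Set Filter Topology

/-!
With `A = e^{θ₁v₁+ξ(v₁)}`, `B = e^{θ₁v₂+ξ(v₂)}` and `C = e^{−θ₁(v₁−v₂)}` we have `r = f ∘ Γ` for the
linear fractional map `f(t) = C (1 + A t) / (1 + B t)`, and
`f(t) − f(s) = C (A − B) (t − s) / ((1 + B t)(1 + B s))`.
So `f` is monotone on `[0, ∞)` when `B ≤ A` and antitone when `A ≤ B`, and this passes to `f ∘ Γ`;
conversely, comparing `r 0 = f 0` with `r x = f (Γ x)` at a point where `Γ x > 0` recovers the sign
of `A − B`. Finally `f(t) → C A / B = e^{ξ(v₁)−ξ(v₂)}` as `t → ∞`, and `Γ(x) → ∞`.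
-/

noncomputable def linFrac (A B C t : ℝ) : ℝ := C * (1 + A * t) / (1 + B * t)

section LinFrac

variable {A B C s t : ℝ}

lemma linFrac_zero : linFrac A B C 0 = C := by
  simp [linFrac]

lemma linFrac_sub_linFrac (hB : 0 ≤ B) (hs : 0 ≤ s) (ht : 0 ≤ t) :
    linFrac A B C t - linFrac A B C s =
      C * (A - B) * (t - s) / ((1 + B * t) * (1 + B * s)) := by
  have : 0 < 1 + B * t := by positivity
  have : 0 < 1 + B * s := by positivity
  unfold linFrac
  field_simp
  ring

lemma monotoneOn_linFrac (hC : 0 ≤ C) (hB : 0 ≤ B) (hBA : B ≤ A) :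
    MonotoneOn (linFrac A B C) (Ici 0) := by
  rintro s (hs : 0 ≤ s) t (ht : 0 ≤ t) hst
  rw [← sub_nonneg, linFrac_sub_linFrac hB hs ht]
  have : 0 ≤ C * (A - B) := mul_nonneg hC (sub_nonneg.2 hBA)
  have : 0 ≤ t - s := sub_nonneg.2 hst
  positivity

lemma antitoneOn_linFrac (hC : 0 ≤ C) (hB : 0 ≤ B) (hAB : A ≤ B) :
    AntitoneOn (linFrac A B C) (Ici 0) := by
  rintro s (hs : 0 ≤ s) t (ht : 0 ≤ t) hst
  rw [← sub_nonpos, linFrac_sub_linFrac hB hs ht]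
  have hsign : C * (A - B) * (t - s) ≤ 0 :=
    mul_nonpos_of_nonpos_of_nonneg (mul_nonpos_of_nonneg_of_nonpos hC (sub_nonpos.2 hAB))
      (sub_nonneg.2 hst)
  exact div_nonpos_of_nonpos_of_nonneg hsign (by positivity)

lemma linFrac_sub_linFrac_zero (hB : 0 ≤ B) (ht : 0 ≤ t) :
    (linFrac A B C t - linFrac A B C 0) * (1 + B * t) = C * (A - B) * t := by
  rw [linFrac_sub_linFrac hB le_rfl ht]
  field_simp
  ring

lemma le_of_linFrac_zero_le (hC : 0 < C) (hB : 0 ≤ B) (ht : 0 < t)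
    (h : linFrac A B C 0 ≤ linFrac A B C t) : B ≤ A := by
  have key : 0 ≤ C * (A - B) * t := by
    rw [← linFrac_sub_linFrac_zero hB ht.le]
    exact mul_nonneg (sub_nonneg.2 h) (by positivity)
  exact sub_nonneg.1 (nonneg_of_mul_nonneg_right (nonneg_of_mul_nonneg_left key ht) hC)

lemma le_of_linFrac_le_linFrac_zero (hC : 0 < C) (hB : 0 ≤ B) (ht : 0 < t)
    (h : linFrac A B C t ≤ linFrac A B C 0) : A ≤ B := by
  have key : C * (A - B) * t ≤ 0 := by
    rw [← linFrac_sub_linFrac_zero hB ht.le]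
    exact mul_nonpos_of_nonpos_of_nonneg (sub_nonpos.2 h) (by positivity)
  exact sub_nonpos.1 (nonpos_of_mul_nonpos_right (nonpos_of_mul_nonpos_left key ht) hC)

lemma tendsto_linFrac_atTop (hB : 0 < B) :
    Tendsto (linFrac A B C) atTop (𝓝 (C * A / B)) := by
  have hlim : Tendsto (fun t : ℝ => C * (t⁻¹ + A) / (t⁻¹ + B)) atTop
      (𝓝 (C * (0 + A) / (0 + B))) :=
    (tendsto_const_nhds.mul (tendsto_inv_atTop_zero.add tendsto_const_nhds)).div
      (tendsto_inv_atTop_zero.add tendsto_const_nhds) (by simpa using hB.ne')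
  simp only [zero_add] at hlim
  refine hlim.congr' ?_
  filter_upwards [eventually_gt_atTop 0] with t ht
  unfold linFrac
  field_simp

variable {g : ℝ → ℝ}

lemma monotoneOn_linFrac_comp_iff (hC : 0 < C) (hB : 0 ≤ B) (hg : MonotoneOn g (Ici 0))
    (hg0 : g 0 = 0) (hpos : ∃ x, 0 ≤ x ∧ 0 < g x) :
    MonotoneOn (linFrac A B C ∘ g) (Ici 0) ↔ B ≤ A := by
  have hmaps : MapsTo g (Ici 0) (Ici 0) := by simpa [hg0] using hg.mapsTo_Ici
  refine ⟨fun hmono => ?_, fun hBA => (monotoneOn_linFrac hC.le hB hBA).comp hg hmaps⟩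
  obtain ⟨x, hx, hgx⟩ := hpos
  have h := hmono self_mem_Ici hx hx
  simp only [Function.comp, hg0] at h
  exact le_of_linFrac_zero_le hC hB hgx h

lemma antitoneOn_linFrac_comp_iff (hC : 0 < C) (hB : 0 ≤ B) (hg : MonotoneOn g (Ici 0))
    (hg0 : g 0 = 0) (hpos : ∃ x, 0 ≤ x ∧ 0 < g x) :
    AntitoneOn (linFrac A B C ∘ g) (Ici 0) ↔ A ≤ B := by
  have hmaps : MapsTo g (Ici 0) (Ici 0) := by simpa [hg0] using hg.mapsTo_Ici
  refine ⟨fun hanti => ?_,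
    fun hAB => (antitoneOn_linFrac hC.le hB hAB).comp_MonotoneOn hg hmaps⟩
  obtain ⟨x, hx, hgx⟩ := hpos
  have h := hanti self_mem_Ici hx hx
  simp only [Function.comp, hg0] at h
  exact le_of_linFrac_le_linFrac_zero hC hB hgx h

end LinFrac

theorem stmt_6_general (θ₁ v₁ v₂ : ℝ) (ξ : ℝ → ℝ) (Γ : ℝ → ℝ)
    (hΓmono : MonotoneOn Γ (Ici 0))
    (hΓ0 : Γ 0 = 0) (hΓtop : Filter.Tendsto Γ Filter.atTop Filter.atTop)
    (r : ℝ → ℝ)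
    (hr : ∀ x : ℝ, r x = Real.exp (-(θ₁ * (v₁ - v₂))) *
      (1 + Real.exp (θ₁ * v₁ + ξ v₁) * Γ x) / (1 + Real.exp (θ₁ * v₂ + ξ v₂) * Γ x)) :
    r 0 = Real.exp (-(θ₁ * (v₁ - v₂))) ∧
    Filter.Tendsto r Filter.atTop (nhds (Real.exp (ξ v₁ - ξ v₂))) ∧
    (MonotoneOn r (Ici 0) ↔ ξ v₂ - ξ v₁ ≤ θ₁ * (v₁ - v₂)) ∧
    (AntitoneOn r (Ici 0) ↔ θ₁ * (v₁ - v₂) ≤ ξ v₂ - ξ v₁) := by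
  obtain rfl : r = linFrac (Real.exp (θ₁ * v₁ + ξ v₁)) (Real.exp (θ₁ * v₂ + ξ v₂))
      (Real.exp (-(θ₁ * (v₁ - v₂)))) ∘ Γ := funext hr
  have hpos : ∃ x, 0 ≤ x ∧ 0 < Γ x :=
    ((eventually_ge_atTop 0).and (hΓtop.eventually_gt_atTop 0)).exists
  have hlimit : Real.exp (-(θ₁ * (v₁ - v₂))) * Real.exp (θ₁ * v₁ + ξ v₁) /
      Real.exp (θ₁ * v₂ + ξ v₂) = Real.exp (ξ v₁ - ξ v₂) := by
    rw [← Real.exp_add, ← Real.exp_sub]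
    ring_nf
  refine ⟨by simp [hΓ0, linFrac_zero], hlimit ▸ (tendsto_linFrac_atTop (Real.exp_pos _)).comp hΓtop,
    ?_, ?_⟩
  · rw [monotoneOn_linFrac_comp_iff (Real.exp_pos _) (Real.exp_pos _).le hΓmono hΓ0 hpos,
      Real.exp_le_exp]
    constructor <;> intro h <;> linarith
  · rw [antitoneOn_linFrac_comp_iff (Real.exp_pos _) (Real.exp_pos _).le hΓmono hΓ0 hpos,
      Real.exp_le_exp]
    constructor <;> intro h <;> linarith

/-- Let `θ₁, v₁, v₂ ∈ ℝ`, `ξ : ℝ → ℝ`, and let `Γ : [0,∞) → [0,∞)` be a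
continuous nondecreasing function with `Γ(0) = 0` and `Γ(x) → ∞` as `x → ∞`. Define
the hazard ratio function
`r(x) = e^{−θ₁(v₁−v₂)} · (1 + e^{θ₁v₁+ξ(v₁)} Γ(x)) / (1 + e^{θ₁v₂+ξ(v₂)} Γ(x))` for
`x ≥ 0`. Then: (i) `r(0) = e^{−θ₁(v₁−v₂)}`; (ii) `lim_{x→∞} r(x) = e^{ξ(v₁)−ξ(v₂)}`;
(iii) `r` is nondecreasing on `[0,∞)` iff `θ₁(v₁−v₂) ≥ ξ(v₂)−ξ(v₁)`, and nonincreasing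
iff `θ₁(v₁−v₂) ≤ ξ(v₂)−ξ(v₁)`. -/
theorem stmt_6 (θ₁ v₁ v₂ : ℝ) (ξ : ℝ → ℝ) (Γ : ℝ → ℝ)
    (hΓcont : ContinuousOn Γ (Ici 0)) (hΓmono : MonotoneOn Γ (Ici 0))
    (hΓ0 : Γ 0 = 0) (hΓtop : Filter.Tendsto Γ Filter.atTop Filter.atTop)
    (r : ℝ → ℝ)
    (hr : ∀ x : ℝ, r x = Real.exp (-(θ₁ * (v₁ - v₂))) *
      (1 + Real.exp (θ₁ * v₁ + ξ v₁) * Γ x) / (1 + Real.exp (θ₁ * v₂ + ξ v₂) * Γ x)) :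
    r 0 = Real.exp (-(θ₁ * (v₁ - v₂))) ∧
    Filter.Tendsto r Filter.atTop (nhds (Real.exp (ξ v₁ - ξ v₂))) ∧
    (MonotoneOn r (Ici 0) ↔ ξ v₂ - ξ v₁ ≤ θ₁ * (v₁ - v₂)) ∧
    (AntitoneOn r (Ici 0) ↔ θ₁ * (v₁ - v₂) ≤ ξ v₂ - ξ v₁) :=
  stmt_6_general θ₁ v₁ v₂ ξ Γ hΓmono hΓ0 hΓtop r hr
end

section
/- Let F, F̂ : ℝ → [0,1] be nondecreasing functions, p ∈ (0,1), and define ℓ(p) = inf{t : F(t) ≥ p}, u(p) = sup{t : F(t) ≤ p}, and analogously ℓ̂(p), û(p) with F̂ in place of F. Suppose ε > 0 is such that F(ℓ(p) − ε) < p and F(u(p) + ε) > p, and suppose sup_t |F̂(t) − F(t)| < min(p − F(ℓ(p) − ε), F(u(p) + ε) − p). Then ℓ(p) − ε ≤ ℓ̂(p) and û(p) ≤ u(p) + ε. -/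
open Set

/-- Let `F, F̂ : ℝ → [0,1]` be nondecreasing, `p ∈ (0,1)`, and define
`ℓ(p) = inf{t : F(t) ≥ p}`, `u(p) = sup{t : F(t) ≤ p}`, and analogously `ℓ̂(p), û(p)`
with `F̂` in place of `F`. Suppose `ε > 0` is such that `F(ℓ(p) − ε) < p` and
`F(u(p) + ε) > p`, and suppose `sup_t |F̂(t) − F(t)| < min(p − F(ℓ(p) − ε), F(u(p) + ε) − p)`.
Then `ℓ(p) − ε ≤ ℓ̂(p)` and `û(p) ≤ u(p) + ε`. -/
theorem stmt_10 (F Fhat : ℝ → ℝ) (hF : Monotone F) (hFhat : Monotone Fhat)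
    (hFcod : ∀ t, F t ∈ Icc (0:ℝ) 1) (hFhatcod : ∀ t, Fhat t ∈ Icc (0:ℝ) 1)
    (p : ℝ) (hp : p ∈ Ioo (0:ℝ) 1)
    (l u lhat uhat : ℝ)
    (hl : l = sInf {t | p ≤ F t}) (hu : u = sSup {t | F t ≤ p})
    (hlhat : lhat = sInf {t | p ≤ Fhat t}) (huhat : uhat = sSup {t | Fhat t ≤ p})
    (ε : ℝ) (hε : 0 < ε)
    (h1 : F (l - ε) < p) (h2 : p < F (u + ε))
    (hsup : (⨆ t : ℝ, |Fhat t - F t|) < min (p - F (l - ε)) (F (u + ε) - p)) :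
    l - ε ≤ lhat ∧ uhat ≤ u + ε := by
  have hbdd : BddAbove (Set.range fun t : ℝ => |Fhat t - F t|) := by
    refine ⟨1, fun x hx => ?_⟩
    obtain ⟨t, rfl⟩ := hx
    have h1 := hFcod t
    have h2 := hFhatcod t
    rw [abs_le]
    constructor <;> simp at h1 h2 <;> linarith
  have hle : ∀ t : ℝ, |Fhat t - F t| ≤ ⨆ t : ℝ, |Fhat t - F t| :=
    fun t => le_ciSup hbdd t
  have key : ∀ t : ℝ, |Fhat t - F t| < min (p - F (l - ε)) (F (u + ε) - p) :=
    fun t => lt_of_le_of_lt (hle t) hsup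
  -- Fhat (l - ε) < p
  have hFl : Fhat (l - ε) < p := by
    have := (abs_lt.mp (lt_of_lt_of_le (key (l - ε)) (min_le_left _ _))).2
    linarith
  -- Fhat (u + ε) > p
  have hFu : p < Fhat (u + ε) := by
    have := (abs_lt.mp (lt_of_lt_of_le (key (u + ε)) (min_le_right _ _))).1
    linarith
  constructor
  · rw [hlhat]
    refine le_csInf ⟨u + ε, le_of_lt hFu⟩ fun t ht => ?_
    by_contra h
    push_neg at h
    exact absurd (le_trans ht (hFhat h.le)) (not_le.mpr hFl)
  · rw [huhat]
    refine csSup_le ⟨l - ε, le_of_lt hFl⟩ fun t ht => ?_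
    by_contra h
    push_neg at h
    exact absurd (le_trans (hFhat h.le) ht) (not_le.mpr hFu)
end

section
/- Let F : ℝ → [0,1] be nondecreasing, continuous and strictly increasing on an interval [a,b], and let 0 < p₁ ≤ p₂ < 1 with F(a) < p₁ and p₂ < F(b). Let (F_n) be a sequence of nondecreasing functions F_n : ℝ → [0,1] with sup_t |F_n(t) − F(t)| → 0. Define Q(p) = inf{t : F(t) ≥ p} and Q_n(p) = inf{t : F_n(t) ≥ p}. Then sup_{p ∈ [p₁,p₂]} |Q_n(p) − Q(p)| → 0. -/
open Set

private lemma aux_key {F : ℝ → ℝ} {a b p : ℝ} (hF : Monotone F)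
    (hFcont : ContinuousOn F (Icc a b)) (hap : F a < p) (hpb : p < F b) :
    a < sInf {t | p ≤ F t} ∧ sInf {t | p ≤ F t} < b ∧ F (sInf {t | p ≤ F t}) = p := by
  set S := {t | p ≤ F t} with hS
  have hbS : b ∈ S := le_of_lt hpb
  have hlb : ∀ t ∈ S, a ≤ t := by
    intro t ht
    by_contra h
    push_neg at h
    exact absurd (ht.trans (hF h.le)) (not_le.2 hap)
  have hne : S.Nonempty := ⟨b, hbS⟩
  have hbdd : BddBelow S := ⟨a, hlb⟩
  set q := sInf S with hq
  have haq : a ≤ q := le_csInf hne hlb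
  have hqb : q ≤ b := csInf_le hbdd hbS
  have hge : p ≤ F q := by
    rcases eq_or_lt_of_le hqb with h | h
    · rw [h]; exact hpb.le
    · have hc : Filter.Tendsto F (nhdsWithin q (Ioc q b)) (nhds (F q)) :=
        (hFcont q ⟨haq, hqb⟩).mono_left
          (nhdsWithin_mono q (fun t ht => ⟨haq.trans ht.1.le, ht.2⟩))
      haveI := left_nhdsWithin_Ioc_neBot h
      refine ge_of_tendsto hc ?_
      filter_upwards [self_mem_nhdsWithin] with t ht
      obtain ⟨s, hsS, hst⟩ := exists_lt_of_csInf_lt hne ht.1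
      exact hsS.trans (hF hst.le)
  have hle : F q ≤ p := by
    rcases eq_or_lt_of_le haq with h | h
    · rw [← h]; exact hap.le
    · have hc : Filter.Tendsto F (nhdsWithin q (Ico a q)) (nhds (F q)) :=
        (hFcont q ⟨haq, hqb⟩).mono_left
          (nhdsWithin_mono q (fun t ht => ⟨ht.1, ht.2.le.trans hqb⟩))
      haveI := right_nhdsWithin_Ico_neBot h
      refine le_of_tendsto hc ?_
      filter_upwards [self_mem_nhdsWithin] with t ht
      have htn : t ∉ S := notMem_of_lt_csInf ht.2 hbdd
      exact le_of_not_ge htn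
  have heq : F q = p := le_antisymm hle hge
  refine ⟨?_, ?_, heq⟩
  · rcases eq_or_lt_of_le haq with h | h
    · rw [← h] at heq
      exact absurd heq hap.ne
    · exact h
  · rcases eq_or_lt_of_le hqb with h | h
    · rw [h] at heq
      exact absurd heq (ne_of_gt hpb)
    · exact h

/-- Let `F : ℝ → [0,1]` be nondecreasing, continuous and strictly
increasing on an interval `[a,b]`, and let `0 < p₁ ≤ p₂ < 1` with `F(a) < p₁` and
`p₂ < F(b)`. Let `(F_n)` be a sequence of nondecreasing functions `F_n : ℝ → [0,1]`
with `sup_t |F_n(t) − F(t)| → 0`. Define `Q(p) = inf{t : F(t) ≥ p}` and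
`Q_n(p) = inf{t : F_n(t) ≥ p}`. Then `sup_{p ∈ [p₁,p₂]} |Q_n(p) − Q(p)| → 0`. -/
theorem stmt_11 (F : ℝ → ℝ) (a b p₁ p₂ : ℝ)
    (hF : Monotone F) (hFcod : ∀ t, F t ∈ Icc (0:ℝ) 1)
    (hFcont : ContinuousOn F (Icc a b)) (hFstrict : StrictMonoOn F (Icc a b))
    (hp₁ : 0 < p₁) (hp : p₁ ≤ p₂) (hp₂ : p₂ < 1)
    (ha : F a < p₁) (hb : p₂ < F b)
    (Fn : ℕ → ℝ → ℝ) (hFn : ∀ n, Monotone (Fn n))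
    (hFncod : ∀ n t, Fn n t ∈ Icc (0:ℝ) 1)
    (hconv : Filter.Tendsto (fun n => ⨆ t : ℝ, |Fn n t - F t|) Filter.atTop (nhds 0))
    (Q : ℝ → ℝ) (hQ : ∀ p, Q p = sInf {t | p ≤ F t})
    (Qn : ℕ → ℝ → ℝ) (hQn : ∀ n p, Qn n p = sInf {t | p ≤ Fn n t}) :
    Filter.Tendsto (fun n => ⨆ p : Icc p₁ p₂, |Qn n p - Q p|) Filter.atTop (nhds 0) := by
  have hab : a < b := by
    by_contra h
    push_neg at h
    have := hF h
    linarith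
  have key : ∀ p, p₁ ≤ p → p ≤ p₂ → a < Q p ∧ Q p < b ∧ F (Q p) = p := by
    intro p hpl hpu
    rw [hQ]
    exact aux_key hF hFcont (ha.trans_le hpl) (hpu.trans_lt hb)
  obtain ⟨hax₁, hx₁b, hFx₁⟩ := key p₁ le_rfl hp
  obtain ⟨hax₂, hx₂b, hFx₂⟩ := key p₂ hp le_rfl
  set x₁ := Q p₁ with hx₁def
  set x₂ := Q p₂ with hx₂def
  have hx₁x₂ : x₁ ≤ x₂ := by
    refine (hFstrict.le_iff_le ⟨hax₁.le, hx₁b.le⟩ ⟨hax₂.le, hx₂b.le⟩).1 ?_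
    rw [hFx₁, hFx₂]; exact hp
  have hQmem : ∀ p, p₁ ≤ p → p ≤ p₂ → Q p ∈ Icc x₁ x₂ := by
    intro p hpl hpu
    obtain ⟨haq, hqb, hFq⟩ := key p hpl hpu
    constructor
    · exact (hFstrict.le_iff_le ⟨hax₁.le, hx₁b.le⟩ ⟨haq.le, hqb.le⟩).1
        (by rw [hFx₁, hFq]; exact hpl)
    · exact (hFstrict.le_iff_le ⟨haq.le, hqb.le⟩ ⟨hax₂.le, hx₂b.le⟩).1
        (by rw [hFx₂, hFq]; exact hpu)
  have main : ∀ ε : ℝ, 0 < ε →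
      ∀ᶠ n in Filter.atTop, ∀ p, p₁ ≤ p → p ≤ p₂ → |Qn n p - Q p| ≤ ε := by
    intro ε hε
    set g : ℝ → ℝ := fun x => min (F (min b (x + ε)) - F x) (F x - F (max a (x - ε)))
      with hgdef
    have hmapsto1 : ∀ x ∈ Icc x₁ x₂, min b (x + ε) ∈ Icc a b := by
      intro x hx
      exact ⟨le_min hab.le (by linarith [hx.1]), min_le_left _ _⟩
    have hmapsto2 : ∀ x ∈ Icc x₁ x₂, max a (x - ε) ∈ Icc a b := by
      intro x hx
      exact ⟨le_max_left _ _, max_le hab.le (by linarith [hx.2])⟩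
    have hsub : Icc x₁ x₂ ⊆ Icc a b := fun x hx => ⟨hax₁.le.trans hx.1, hx.2.trans hx₂b.le⟩
    have hgc : ContinuousOn g (Icc x₁ x₂) := by
      apply ContinuousOn.inf
      · apply ContinuousOn.sub
        · exact hFcont.comp
            ((continuous_const.inf (continuous_id.add continuous_const)).continuousOn)
            hmapsto1
        · exact hFcont.mono hsub
      · apply ContinuousOn.sub
        · exact hFcont.mono hsub
        · exact hFcont.comp
            ((continuous_const.sup (continuous_id.sub continuous_const)).continuousOn)
            hmapsto2
    have hgpos : ∀ x ∈ Icc x₁ x₂, 0 < g x := by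
      intro x hx
      have hxab : x ∈ Icc a b := hsub hx
      have h1 : F x < F (min b (x + ε)) := by
        apply hFstrict hxab (hmapsto1 x hx)
        exact lt_min (lt_of_le_of_lt hx.2 hx₂b) (by linarith)
      have h2 : F (max a (x - ε)) < F x := by
        apply hFstrict (hmapsto2 x hx) hxab
        exact max_lt (lt_of_lt_of_le hax₁ hx.1) (by linarith)
      exact lt_min (by linarith) (by linarith)
    obtain ⟨x₀, hx₀mem, hx₀min⟩ :=
      isCompact_Icc.exists_isMinOn (nonempty_Icc.2 hx₁x₂) hgc
    set δ := g x₀ with hδdef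
    have hδ : 0 < δ := hgpos x₀ hx₀mem
    have hev : ∀ᶠ n in Filter.atTop, (⨆ t : ℝ, |Fn n t - F t|) < δ :=
      hconv.eventually_lt_const hδ
    filter_upwards [hev] with n hn
    intro p hpl hpu
    have hptw : ∀ t, |Fn n t - F t| < δ := by
      intro t
      refine lt_of_le_of_lt (le_ciSup (f := fun t => |Fn n t - F t|) ?_ t) hn
      refine ⟨1, ?_⟩
      rintro y ⟨t, rfl⟩
      have h1 := hFncod n t
      have h2 := hFcod t
      rw [abs_sub_le_iff]
      exact ⟨by linarith [h1.2, h2.1], by linarith [h1.1, h2.2]⟩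
    obtain ⟨haq, hqb, hFq⟩ := key p hpl hpu
    have hqmem : Q p ∈ Icc x₁ x₂ := hQmem p hpl hpu
    have hgq : δ ≤ g (Q p) := isMinOn_iff.1 hx₀min (Q p) hqmem
    have hA : F (Q p) + δ ≤ F (min b (Q p + ε)) := by
      have := hgq.trans (min_le_left _ _)
      linarith
    have hB : F (max a (Q p - ε)) ≤ F (Q p) - δ := by
      have := hgq.trans (min_le_right _ _)
      linarith
    have hmemSn : p ≤ Fn n (min b (Q p + ε)) := by
      have h1 := abs_lt.1 (hptw (min b (Q p + ε)))
      rw [hFq] at hA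
      linarith [h1.1]
    have hlbSn : ∀ t ∈ {t : ℝ | p ≤ Fn n t}, Q p - ε ≤ t := by
      intro t ht
      have h1 := abs_lt.1 (hptw t)
      have hp' : p ≤ Fn n t := ht
      have hFt : F (Q p) - δ < F t := by
        rw [← hFq] at hp'
        linarith [h1.1]
      by_contra hcon
      push_neg at hcon
      have : F t ≤ F (max a (Q p - ε)) := hF (le_trans hcon.le (le_max_right _ _))
      linarith
    have hSnne : ({t : ℝ | p ≤ Fn n t}).Nonempty := ⟨_, hmemSn⟩
    have hSnbdd : BddBelow {t : ℝ | p ≤ Fn n t} := ⟨Q p - ε, hlbSn⟩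
    have hup : Qn n p ≤ Q p + ε := by
      rw [hQn]
      exact le_trans (csInf_le hSnbdd hmemSn) (min_le_right _ _)
    have hlo : Q p - ε ≤ Qn n p := by
      rw [hQn]
      exact le_csInf hSnne hlbSn
    rw [abs_sub_le_iff]
    exact ⟨by linarith, by linarith⟩
  rw [Metric.tendsto_atTop]
  intro ε hε
  obtain ⟨N, hN⟩ := Filter.eventually_atTop.1 (main (ε / 2) (by linarith))
  refine ⟨N, fun n hn => ?_⟩
  have h0 : 0 ≤ ⨆ p : Icc p₁ p₂, |Qn n p - Q p| :=
    Real.iSup_nonneg fun p => abs_nonneg _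
  have hle : (⨆ p : Icc p₁ p₂, |Qn n p - Q p|) ≤ ε / 2 :=
    Real.iSup_le (fun p => hN n hn p p.2.1 p.2.2) (by linarith)
  rw [Real.dist_eq, sub_zero, abs_of_nonneg h0]
  linarith
end

section
/- Let F be continuously differentiable on a compact interval [a,b] with derivative f satisfying inf_{[a,b]} f = c > 0. Let K be a set, Q : K → (a,b) a function, and (Q_n) a sequence of functions Q_n : K → [a,b] with sup_{p ∈ K} |Q_n(p) − Q(p)| → 0. Define h_n(p) = (Q_n(p) − Q(p)) / (F(Q_n(p)) − F(Q(p))) when Q_n(p) ≠ Q(p), and h_n(p) = 1/f(Q(p)) otherwise. Then sup_{p ∈ K} |h_n(p) − 1/f(Q(p))| → 0. -/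
open Set

/-- MVT helper: the slope between two points of `Icc a b` equals `f ξ` for some
intermediate `ξ`, hence the inverse slope equals `1 / f ξ`. -/
lemma stmt_12_aux (F f : ℝ → ℝ) (a b : ℝ)
    (hderiv : ∀ x ∈ Icc a b, HasDerivWithinAt F (f x) (Icc a b) x)
    (hfpos : ∀ x ∈ Icc a b, 0 < f x) :
    ∀ x y, x ∈ Icc a b → y ∈ Icc a b → x < y →
      ∃ ξ ∈ Icc a b, (y - x) / (F y - F x) = 1 / f ξ ∧ |ξ - x| ≤ |y - x| ∧ |ξ - y| ≤ |y - x| := by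
  intro x y hx hy hxy
  have hFcont : ContinuousOn F (Icc a b) := fun z hz => (hderiv z hz).continuousWithinAt
  have hcont : ContinuousOn F (Icc x y) :=
    hFcont.mono (Icc_subset_Icc hx.1 hy.2)
  have hd : ∀ z ∈ Ioo x y, HasDerivAt F (f z) z := by
    intro z hz
    have hzab : z ∈ Ioo a b := ⟨lt_of_le_of_lt hx.1 hz.1, lt_of_lt_of_le hz.2 hy.2⟩
    exact (hderiv z ⟨hzab.1.le, hzab.2.le⟩).hasDerivAt (Icc_mem_nhds hzab.1 hzab.2)
  obtain ⟨ξ, hξ, hslope⟩ := exists_hasDerivAt_eq_slope F f hxy hcont hd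
  have hξab : ξ ∈ Icc a b := ⟨le_trans hx.1 hξ.1.le, le_trans hξ.2.le hy.2⟩
  refine ⟨ξ, hξab, ?_, ?_, ?_⟩
  · have hfξ : f ξ ≠ 0 := (hfpos ξ hξab).ne'
    have hyx : y - x ≠ 0 := sub_ne_zero.mpr hxy.ne'
    have : F y - F x = f ξ * (y - x) := by
      field_simp at hslope
      linarith [hslope]
    rw [this]
    field_simp
  · rw [abs_of_nonneg (by linarith [hξ.1] : (0:ℝ) ≤ ξ - x),
      abs_of_nonneg (by linarith : (0:ℝ) ≤ y - x)]
    linarith [hξ.2]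
  · rw [abs_of_nonpos (by linarith [hξ.2] : ξ - y ≤ 0),
      abs_of_nonneg (by linarith : (0:ℝ) ≤ y - x)]
    linarith [hξ.1]

/-- Let `F` be continuously differentiable on a compact interval `[a,b]`
with derivative `f` satisfying `inf_{[a,b]} f = c > 0`. Let `K` be a set, `Q : K → (a,b)`
a function, and `(Q_n)` a sequence of functions `Q_n : K → [a,b]` with
`sup_{p ∈ K} |Q_n(p) − Q(p)| → 0`. Define
`h_n(p) = (Q_n(p) − Q(p)) / (F(Q_n(p)) − F(Q(p)))` when `Q_n(p) ≠ Q(p)`, and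
`h_n(p) = 1/f(Q(p))` otherwise. Then `sup_{p ∈ K} |h_n(p) − 1/f(Q(p))| → 0`. -/
theorem stmt_12 (F f : ℝ → ℝ) (a b c : ℝ) (hab : a < b)
    (hderiv : ∀ x ∈ Icc a b, HasDerivWithinAt F (f x) (Icc a b) x)
    (hfcont : ContinuousOn f (Icc a b))
    (hc : 0 < c) (hinf : sInf (f '' Icc a b) = c)
    (K : Type*) (Q : K → ℝ) (hQ : ∀ p, Q p ∈ Ioo a b)
    (Qn : ℕ → K → ℝ) (hQn : ∀ n p, Qn n p ∈ Icc a b)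
    (hconv : Filter.Tendsto (fun n => ⨆ p : K, |Qn n p - Q p|) Filter.atTop (nhds 0))
    (h : ℕ → K → ℝ)
    (hh : ∀ n p, h n p = if Qn n p = Q p then 1 / f (Q p)
      else (Qn n p - Q p) / (F (Qn n p) - F (Q p))) :
    Filter.Tendsto (fun n => ⨆ p : K, |h n p - 1 / f (Q p)|) Filter.atTop (nhds 0) := by
  -- lower bound c ≤ f x on Icc a b
  have himg : IsCompact (f '' Icc a b) := isCompact_Icc.image_of_continuousOn hfcont
  have hfc : ∀ x ∈ Icc a b, c ≤ f x := by
    intro x hx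
    rw [← hinf]
    exact csInf_le himg.bddBelow (mem_image_of_mem f hx)
  have hfpos : ∀ x ∈ Icc a b, 0 < f x := fun x hx => lt_of_lt_of_le hc (hfc x hx)
  have hQicc : ∀ p, Q p ∈ Icc a b := fun p => Ioo_subset_Icc_self (hQ p)
  -- uniform continuity of f
  have hunif : UniformContinuousOn f (Icc a b) :=
    isCompact_Icc.uniformContinuousOn_of_continuous hfcont
  rw [Metric.tendsto_atTop]
  intro ε hε
  -- get δ from uniform continuity for ε' = c^2 * ε / 2
  have hε' : (0:ℝ) < c ^ 2 * ε / 2 := by positivity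
  rw [Metric.uniformContinuousOn_iff] at hunif
  obtain ⟨δ, hδ, hδmod⟩ := hunif _ hε'
  -- get N from hconv
  rw [Metric.tendsto_atTop] at hconv
  obtain ⟨N, hN⟩ := hconv δ hδ
  refine ⟨N, fun n hn => ?_⟩
  have hsupδ : (⨆ p : K, |Qn n p - Q p|) < δ := by
    have := hN n hn
    rw [Real.dist_eq, sub_zero] at this
    exact lt_of_le_of_lt (le_abs_self _) this
  -- pointwise bound
  have hBdd : BddAbove (Set.range fun p : K => |Qn n p - Q p|) := by
    refine ⟨b - a, ?_⟩
    rintro _ ⟨p, rfl⟩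
    rw [abs_sub_le_iff]
    constructor <;> [linarith [(hQn n p).2, (hQicc p).1]; linarith [(hQn n p).1, (hQicc p).2]]
  have hpt : ∀ p : K, |h n p - 1 / f (Q p)| ≤ ε / 2 := by
    intro p
    have hQnδ : |Qn n p - Q p| < δ :=
      lt_of_le_of_lt (le_ciSup hBdd p) hsupδ
    rw [hh]
    by_cases heq : Qn n p = Q p
    · rw [if_pos heq]
      simp only [sub_self, abs_zero]
      positivity
    · rw [if_neg heq]
      -- get ξ via MVT (two cases for order)
      have key : ∃ ξ ∈ Icc a b,
          (Qn n p - Q p) / (F (Qn n p) - F (Q p)) = 1 / f ξ ∧ |ξ - Q p| ≤ |Qn n p - Q p| := by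
        rcases lt_or_gt_of_ne heq with hlt | hgt
        · obtain ⟨ξ, hξab, hs, _, hs2⟩ :=
            stmt_12_aux F f a b hderiv hfpos (Qn n p) (Q p) (hQn n p) (hQicc p) hlt
          refine ⟨ξ, hξab, ?_, ?_⟩
          · rw [← hs]
            rw [← neg_div_neg_eq]
            ring_nf
          · rw [abs_sub_comm (Qn n p) (Q p)]
            exact hs2
        · obtain ⟨ξ, hξab, hs, hs1, _⟩ :=
            stmt_12_aux F f a b hderiv hfpos (Q p) (Qn n p) (hQicc p) (hQn n p) hgt
          exact ⟨ξ, hξab, hs, hs1⟩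
      obtain ⟨ξ, hξab, hseq, hsd⟩ := key
      rw [hseq]
      have hfd : dist (f ξ) (f (Q p)) < c ^ 2 * ε / 2 := by
        apply hδmod ξ hξab (Q p) (hQicc p)
        rw [Real.dist_eq]
        exact lt_of_le_of_lt hsd hQnδ
      rw [Real.dist_eq] at hfd
      have h1 : c ≤ f ξ := hfc ξ hξab
      have h2 : c ≤ f (Q p) := hfc (Q p) (hQicc p)
      have h1p : (0:ℝ) < f ξ := lt_of_lt_of_le hc h1
      have h2p : (0:ℝ) < f (Q p) := lt_of_lt_of_le hc h2
      have hmp : (0:ℝ) < f ξ * f (Q p) := mul_pos h1p h2p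
      have heq2 : 1 / f ξ - 1 / f (Q p) = (f (Q p) - f ξ) / (f ξ * f (Q p)) := by
        field_simp
      rw [heq2, abs_div, abs_sub_comm]
      rw [abs_of_pos hmp]
      rw [div_le_iff₀ hmp]
      calc |f ξ - f (Q p)| ≤ c ^ 2 * ε / 2 := hfd.le
        _ ≤ ε / 2 * (f ξ * f (Q p)) := by
            have : c ^ 2 ≤ f ξ * f (Q p) := by nlinarith
            nlinarith
  -- conclude
  rw [Real.dist_eq, sub_zero]
  have hnonneg : 0 ≤ ⨆ p : K, |h n p - 1 / f (Q p)| := Real.iSup_nonneg fun p => abs_nonneg _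
  rw [abs_of_nonneg hnonneg]
  calc (⨆ p : K, |h n p - 1 / f (Q p)|) ≤ ε / 2 := Real.iSup_le hpt (by positivity)
    _ < ε := by linarith
end

section
/- Let ν be a finite Borel measure on [0,τ], let 0 < m₁ ≤ m₂ < ∞ and L ≥ 0, and let s : [0,∞) × [0,τ] → [m₁, m₂] be measurable and satisfy |s(x,u) − s(x',u)| ≤ L|x − x'| for all x, x' ≥ 0 and u ∈ [0,τ]. Then there exists exactly one nondecreasing right-continuous function Γ : [0,τ] → [0,∞) with left limits (with Γ(0−) := 0) satisfying the Volterra integral equation Γ(t) = ∫_{[0,t]} ν(du) / s(Γ(u−), u) for all t ∈ [0,τ]; moreover Γ is bounded, with Γ(τ) ≤ ν([0,τ])/m₁. -/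
/-!
The right-hand side of the equation at `t` sees `Γ` only through its values strictly before `t`,
and `x ↦ 1 / s(x, u)` is `L / m₁²`-Lipschitz on `[0, ∞)`. Hence on an interval `(x, y)` with
`L / m₁² · ν((x, y)) < 1` the equation is a contraction for the sup norm on `(x, y)`, whatever
atoms `ν` has at `x` and `y`: a solution up to `x` extends (by Picard iteration) and is unique
up to `y`. Every point has a punctured neighbourhood of small `ν`-measure, so a continuous
induction carries existence and uniqueness from below `0` to `τ`. The bound on `Γ(τ)` is just
`1 / s ≤ 1 / m₁`.
-/
open Set MeasureTheory

/-- A nondecreasing right-continuous function `Γ` on `[0,τ]` (extended to `ℝ`, with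
`Γ = 0` to the left of `0`, so that `Γ(0−) = 0`) solving the Volterra integral
equation `Γ(t) = ∫_{[0,t]} ν(du) / s(Γ(u−), u)`. -/
def IsVolterraSolution (τ : ℝ) (ν : MeasureTheory.Measure ℝ) (s : ℝ → ℝ → ℝ)
    (Γ : ℝ → ℝ) : Prop :=
  Monotone Γ ∧ (∀ t < (0:ℝ), Γ t = 0) ∧
  (∀ t ∈ Set.Ico 0 τ, ContinuousWithinAt Γ (Set.Ici t) t) ∧
  ∀ t ∈ Set.Icc 0 τ, Γ t = ∫ u in Set.Icc 0 t, (s (Function.leftLim Γ u) u)⁻¹ ∂ν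

open Filter Topology Metric

theorem tendsto_measureReal_ball_diff_singleton (ν : Measure ℝ) [IsFiniteMeasure ν] (c : ℝ) :
    Tendsto (fun r => ν.real (ball c r \ {c})) (𝓝[>] 0) (𝓝 0) := by
  have hempty : ⋂ r > (0:ℝ), ball c r \ {c} = ∅ := by
    refine eq_empty_of_forall_notMem fun u hu => ?_
    simp only [mem_iInter] at hu
    exact lt_irrefl _ (mem_ball.1 (hu (dist u c) (dist_pos.2 (hu 1 one_pos).2)).1)
  have h := tendsto_measure_biInter_gt (μ := ν) (s := fun r => ball c r \ {c}) (a := 0)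
    (fun _ _ => (measurableSet_ball.diff (measurableSet_singleton c)).nullMeasurableSet)
    (fun _ _ _ hij => sdiff_subset_sdiff_left (ball_subset_ball hij))
    ⟨1, one_pos, measure_ne_top ν _⟩
  rw [hempty, measure_empty] at h
  exact (ENNReal.tendsto_toReal ENNReal.zero_ne_top).comp h

theorem induction_of_mul_measureReal_Ioo_lt_one (ν : Measure ℝ) [IsFiniteMeasure ν] {C : ℝ}
    (hC : 0 ≤ C) {P : ℝ → Prop} {a b : ℝ} (hab : a ≤ b) (ha : P a)
    (hstep : ∀ x y, a ≤ x → x < y → y ≤ b → C * ν.real (Ioo x y) < 1 → P x → P y) : P b := by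
  set S := {x ∈ Icc a b | P x}
  have hS : BddAbove S := ⟨b, fun x hx => hx.1.2⟩
  have haS : a ∈ S := ⟨⟨le_rfl, hab⟩, ha⟩
  set c := sSup S
  have hac : a ≤ c := le_csSup hS haS
  have hcb : c ≤ b := csSup_le ⟨a, haS⟩ fun x hx => hx.1.2
  obtain ⟨δ, hsmall, hδ⟩ := ((((tendsto_measureReal_ball_diff_singleton ν c).const_mul C).eventually
    (gt_mem_nhds (by simp : C * 0 < 1))).and self_mem_nhdsWithin).exists
  have hIoo_small : ∀ x y, c - δ ≤ x → y ≤ c + δ → (x = c ∨ y = c) →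
      C * ν.real (Ioo x y) < 1 := by
    intro x y hx hy hxy
    refine lt_of_le_of_lt (mul_le_mul_of_nonneg_left (measureReal_mono fun u hu => ?_) hC) hsmall
    refine ⟨?_, ?_⟩
    · rw [mem_ball, Real.dist_eq, abs_lt]
      constructor <;> linarith [hu.1, hu.2]
    · rcases hxy with rfl | rfl
      exacts [hu.1.ne', hu.2.ne]
  have hPc : P c := by
    obtain ⟨x, hxS, hx⟩ := exists_lt_of_lt_csSup ⟨a, haS⟩ (sub_lt_self c hδ)
    rcases (le_csSup hS hxS).lt_or_eq with hxc | rfl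
    · exact hstep x c hxS.1.1 hxc hcb (hIoo_small x c hx.le (by linarith) (Or.inr rfl)) hxS.2
    · exact hxS.2
  obtain hcb | hcb := hcb.lt_or_eq
  · have hcy : c < min b (c + δ) := lt_min hcb (by linarith)
    have hy := hstep c _ hac hcy (min_le_left _ _)
      (hIoo_small c _ (by linarith) (min_le_right _ _) (Or.inl rfl)) hPc
    exact absurd (le_csSup hS ⟨⟨hac.trans hcy.le, min_le_left _ _⟩, hy⟩) (not_le.2 hcy)
  · exact hcb ▸ hPc

theorem Monotone.leftLim_eq_of_eqOn_Iio {ψ₁ ψ₂ : ℝ → ℝ} (h₁ : Monotone ψ₁) (h₂ : Monotone ψ₂)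
    {u : ℝ} (h : EqOn ψ₁ ψ₂ (Iio u)) : Function.leftLim ψ₁ u = Function.leftLim ψ₂ u :=
  tendsto_nhds_unique ((h₁.tendsto_leftLim u).congr' (eventually_nhdsWithin_of_forall h))
    (h₂.tendsto_leftLim u)

theorem Monotone.abs_leftLim_sub_leftLim_le {ψ₁ ψ₂ : ℝ → ℝ} (h₁ : Monotone ψ₁)
    (h₂ : Monotone ψ₂) {u d : ℝ} (h : ∀ w < u, |ψ₁ w - ψ₂ w| ≤ d) :
    |Function.leftLim ψ₁ u - Function.leftLim ψ₂ u| ≤ d :=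
  _root_.le_of_tendsto ((h₁.tendsto_leftLim u).sub (h₂.tendsto_leftLim u)).abs
    (eventually_nhdsWithin_of_forall h)

def MonotoneFromZero (ψ : ℝ → ℝ) : Prop := Monotone ψ ∧ ∀ t < 0, ψ t = 0

namespace MonotoneFromZero

variable {ψ ψ₁ ψ₂ : ℝ → ℝ}

theorem nonneg (h : MonotoneFromZero ψ) (t : ℝ) : 0 ≤ ψ t :=
  (h.2 (min t 0 - 1) (by linarith [min_le_right t 0])).symm.le.trans
    (h.1 (by linarith [min_le_left t 0]))

theorem leftLim_nonneg (h : MonotoneFromZero ψ) (u : ℝ) : 0 ≤ Function.leftLim ψ u :=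
  (h.nonneg (u - 1)).trans (h.1.le_leftLim (by linarith))

theorem abs_sub_le (h₁ : MonotoneFromZero ψ₁) (h₂ : MonotoneFromZero ψ₂) {v y : ℝ}
    (hvy : v ≤ y) : |ψ₁ v - ψ₂ v| ≤ ψ₁ y + ψ₂ y := by
  rw [abs_sub_le_iff]
  constructor <;> linarith [h₁.nonneg v, h₂.nonneg v, h₁.1 hvy, h₂.1 hvy]

end MonotoneFromZero

noncomputable def volterraOp (ν : Measure ℝ) (s : ℝ → ℝ → ℝ) (ψ : ℝ → ℝ) (t : ℝ) : ℝ :=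
  ∫ u in Icc 0 t, (s (Function.leftLim ψ u) u)⁻¹ ∂ν

section volterraOp

variable {ν : Measure ℝ} {s : ℝ → ℝ → ℝ} {ψ ψ₁ ψ₂ : ℝ → ℝ} {t : ℝ}

theorem volterraOp_of_neg (ht : t < 0) : volterraOp ν s ψ t = 0 := by
  rw [volterraOp, Icc_eq_empty (not_le.2 ht), Measure.restrict_empty, integral_zero_measure]

theorem volterraOp_congr (h₁ : Monotone ψ₁) (h₂ : Monotone ψ₂) (h : EqOn ψ₁ ψ₂ (Iio t)) :
    volterraOp ν s ψ₁ t = volterraOp ν s ψ₂ t :=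
  setIntegral_congr_fun measurableSet_Icc fun u hu => by
    rw [h₁.leftLim_eq_of_eqOn_Iio h₂ fun w hw => h (lt_of_lt_of_le hw hu.2)]

end volterraOp

def IsPartialSolution (ν : Measure ℝ) (s : ℝ → ℝ → ℝ) (b : ℝ) (Γ : ℝ → ℝ) : Prop :=
  MonotoneFromZero Γ ∧ ∀ t ∈ Icc 0 b, Γ t = volterraOp ν s Γ t

namespace IsPartialSolution

variable {ν : Measure ℝ} {s : ℝ → ℝ → ℝ} {Γ Γ₁ Γ₂ : ℝ → ℝ} {b t : ℝ}

theorem zero_of_neg (hb : b < 0) : IsPartialSolution ν s b 0 :=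
  ⟨⟨monotone_const, fun _ _ => rfl⟩, fun _ ht => absurd (ht.1.trans ht.2) (not_le.2 hb)⟩

theorem apply_eq (h : IsPartialSolution ν s b Γ) (ht : t ≤ b) : Γ t = volterraOp ν s Γ t := by
  rcases lt_or_ge t 0 with ht₀ | ht₀
  · rw [h.1.2 t ht₀, volterraOp_of_neg ht₀]
  · exact h.2 t ⟨ht₀, ht⟩

theorem eq_of_eqOn_Iio (h₁ : IsPartialSolution ν s b Γ₁) (h₂ : IsPartialSolution ν s b Γ₂)
    (ht : t ≤ b) (h : EqOn Γ₁ Γ₂ (Iio t)) : Γ₁ t = Γ₂ t := by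
  rw [h₁.apply_eq ht, h₂.apply_eq ht, volterraOp_congr h₁.1.1 h₂.1.1 h]

end IsPartialSolution

structure VolterraSetting (τ m₁ L : ℝ) (ν : Measure ℝ) (s : ℝ → ℝ → ℝ) : Prop where
  m₁_pos : 0 < m₁
  L_nonneg : 0 ≤ L
  ae_mem_Icc : ∀ᵐ u ∂ν, u ∈ Icc 0 τ
  measurable : Measurable (Function.uncurry s)
  le_apply : ∀ x ∈ Ici (0:ℝ), ∀ u ∈ Icc 0 τ, m₁ ≤ s x u
  abs_sub_le : ∀ x ∈ Ici (0:ℝ), ∀ x' ∈ Ici (0:ℝ), ∀ u ∈ Icc 0 τ,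
    |s x u - s x' u| ≤ L * |x - x'|

namespace VolterraSetting

variable {τ m₁ L : ℝ} {ν : Measure ℝ} {s : ℝ → ℝ → ℝ} {ψ ψ₁ ψ₂ Γ₁ Γ₂ : ℝ → ℝ}

theorem lipschitz_div_sq_nonneg (H : VolterraSetting τ m₁ L ν s) : 0 ≤ L / m₁ ^ 2 :=
  div_nonneg H.L_nonneg (sq_nonneg m₁)

theorem abs_inv_sub_inv_le (H : VolterraSetting τ m₁ L ν s) {a b u : ℝ} (ha : 0 ≤ a)
    (hb : 0 ≤ b) (hu : u ∈ Icc 0 τ) : |(s a u)⁻¹ - (s b u)⁻¹| ≤ L / m₁ ^ 2 * |a - b| := by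
  have hsa := H.le_apply a ha u hu
  have hsb := H.le_apply b hb u hu
  have hpa : 0 < s a u := H.m₁_pos.trans_le hsa
  have hpb : 0 < s b u := H.m₁_pos.trans_le hsb
  rw [inv_sub_inv hpa.ne' hpb.ne', abs_div, abs_of_pos (mul_pos hpa hpb), abs_sub_comm,
    div_le_iff₀ (mul_pos hpa hpb)]
  calc |s a u - s b u| ≤ L * |a - b| := H.abs_sub_le a ha b hb u hu
    _ = L / m₁ ^ 2 * |a - b| * m₁ ^ 2 := by field_simp [H.m₁_pos.ne']
    _ ≤ L / m₁ ^ 2 * |a - b| * (s a u * s b u) :=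
      mul_le_mul_of_nonneg_left (by rw [sq]; exact mul_le_mul hsa hsb H.m₁_pos.le hpa.le)
        (mul_nonneg H.lipschitz_div_sq_nonneg (abs_nonneg _))

theorem ae_inv_mem_Icc (H : VolterraSetting τ m₁ L ν s) (hψ : MonotoneFromZero ψ) :
    ∀ᵐ u ∂ν, (s (Function.leftLim ψ u) u)⁻¹ ∈ Icc 0 m₁⁻¹ := by
  filter_upwards [H.ae_mem_Icc] with u hu
  have hs := H.le_apply _ (hψ.leftLim_nonneg u) u hu
  exact ⟨inv_nonneg.2 (H.m₁_pos.le.trans hs), inv_anti₀ H.m₁_pos hs⟩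

theorem integrableOn (H : VolterraSetting τ m₁ L ν s) [IsFiniteMeasure ν]
    (hψ : MonotoneFromZero ψ) (A : Set ℝ) :
    IntegrableOn (fun u => (s (Function.leftLim ψ u) u)⁻¹) A ν := by
  refine Integrable.mono' (integrable_const m₁⁻¹) ?_ (ae_restrict_of_ae ?_)
  · exact (H.measurable.comp (hψ.1.leftLim.measurable.prodMk measurable_id)).inv
      |>.aestronglyMeasurable
  · filter_upwards [H.ae_inv_mem_Icc hψ] with u hu
    rw [Real.norm_eq_abs, abs_of_nonneg hu.1]
    exact hu.2

theorem abs_setIntegral_inv_le (H : VolterraSetting τ m₁ L ν s) [IsFiniteMeasure ν]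
    (hψ : MonotoneFromZero ψ) (A : Set ℝ) :
    |∫ u in A, (s (Function.leftLim ψ u) u)⁻¹ ∂ν| ≤ ν.real A / m₁ := by
  rw [div_eq_inv_mul, ← Real.norm_eq_abs]
  refine norm_setIntegral_le_of_norm_le_const_ae' (measure_lt_top ν A) ?_
  filter_upwards [H.ae_inv_mem_Icc hψ] with u hu _
  rw [Real.norm_eq_abs, abs_of_nonneg hu.1]
  exact hu.2

theorem volterraOp_nonneg (H : VolterraSetting τ m₁ L ν s) (hψ : MonotoneFromZero ψ) (t : ℝ) :
    0 ≤ volterraOp ν s ψ t :=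
  integral_nonneg_of_ae (ae_restrict_of_ae ((H.ae_inv_mem_Icc hψ).mono fun _ hu => hu.1))

theorem volterraOp_le (H : VolterraSetting τ m₁ L ν s) [IsFiniteMeasure ν]
    (hψ : MonotoneFromZero ψ) (t : ℝ) : volterraOp ν s ψ t ≤ ν.real (Icc 0 t) / m₁ :=
  (le_abs_self _).trans (H.abs_setIntegral_inv_le hψ _)

theorem monotone_volterraOp (H : VolterraSetting τ m₁ L ν s) [IsFiniteMeasure ν]
    (hψ : MonotoneFromZero ψ) : Monotone (volterraOp ν s ψ) := fun _ _ ht =>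
  setIntegral_mono_set (H.integrableOn hψ _)
    (ae_restrict_of_ae ((H.ae_inv_mem_Icc hψ).mono fun _ hu => hu.1))
    (Icc_subset_Icc_right ht).eventuallyLE

theorem continuousWithinAt_volterraOp (H : VolterraSetting τ m₁ L ν s) [IsFiniteMeasure ν]
    (hψ : MonotoneFromZero ψ) {t : ℝ} (ht : 0 ≤ t) :
    ContinuousWithinAt (volterraOp ν s ψ) (Ici t) t := by
  rw [Metric.continuousWithinAt_iff]
  intro ε hε
  obtain ⟨δ, hsmall, hδ⟩ := (((tendsto_measureReal_ball_diff_singleton ν t).eventually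
    (gt_mem_nhds (mul_pos hε H.m₁_pos))).and self_mem_nhdsWithin).exists
  refine ⟨δ, hδ, fun {t'} htt' hdist => ?_⟩
  have hsplit : volterraOp ν s ψ t' =
      volterraOp ν s ψ t + ∫ u in Ioc t t', (s (Function.leftLim ψ u) u)⁻¹ ∂ν := by
    rw [volterraOp, volterraOp, ← Icc_union_Ioc_eq_Icc ht htt',
      setIntegral_union ((Iic_disjoint_Ioi le_rfl).mono Icc_subset_Iic_self Ioc_subset_Ioi_self)
        measurableSet_Ioc (H.integrableOn hψ _) (H.integrableOn hψ _)]
  have hIoc : Ioc t t' ⊆ ball t δ \ {t} := fun u hu => by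
    refine ⟨lt_of_le_of_lt ?_ hdist, hu.1.ne'⟩
    rw [Real.dist_eq, Real.dist_eq, abs_of_pos (sub_pos.2 hu.1), abs_of_nonneg (sub_nonneg.2 htt')]
    linarith [hu.2]
  rw [Real.dist_eq, hsplit, add_sub_cancel_left]
  calc _ ≤ ν.real (Ioc t t') / m₁ := H.abs_setIntegral_inv_le hψ _
    _ ≤ ν.real (ball t δ \ {t}) / m₁ :=
      div_le_div_of_nonneg_right (measureReal_mono hIoc) H.m₁_pos.le
    _ < ε := (div_lt_iff₀ H.m₁_pos).2 hsmall

theorem abs_volterraOp_sub_le (H : VolterraSetting τ m₁ L ν s) [IsFiniteMeasure ν]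
    (h₁ : MonotoneFromZero ψ₁) (h₂ : MonotoneFromZero ψ₂) {x t d : ℝ} (hx : EqOn ψ₁ ψ₂ (Iic x))
    (hd : 0 ≤ d) (hbound : ∀ v ∈ Ioo x t, |ψ₁ v - ψ₂ v| ≤ d) :
    |volterraOp ν s ψ₁ t - volterraOp ν s ψ₂ t| ≤ L / m₁ ^ 2 * d * ν.real (Ioc x t) := by
  set g := fun u => (s (Function.leftLim ψ₁ u) u)⁻¹ - (s (Function.leftLim ψ₂ u) u)⁻¹
  have hsub : volterraOp ν s ψ₁ t - volterraOp ν s ψ₂ t = ∫ u in Icc 0 t ∩ Ioc x t, g u ∂ν := by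
    rw [volterraOp, volterraOp, ← integral_sub (H.integrableOn h₁ _) (H.integrableOn h₂ _)]
    refine setIntegral_eq_of_subset_of_forall_sdiff_eq_zero measurableSet_Icc
      inter_subset_left fun u ⟨hu, hux⟩ => ?_
    have hux : u ≤ x := not_lt.1 fun h => hux ⟨hu, h, hu.2⟩
    simp only [h₁.1.leftLim_eq_of_eqOn_Iio h₂.1 fun w hw => hx (hw.le.trans hux), sub_self]
  have hM := H.lipschitz_div_sq_nonneg
  rw [hsub, ← Real.norm_eq_abs]
  refine (norm_setIntegral_le_of_norm_le_const_ae' (measure_lt_top _ _) ?_).trans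
    (mul_le_mul_of_nonneg_left (measureReal_mono inter_subset_right) (mul_nonneg hM hd))
  filter_upwards [H.ae_mem_Icc] with u hu hut
  refine (H.abs_inv_sub_inv_le (h₁.leftLim_nonneg u) (h₂.leftLim_nonneg u) hu).trans
    (mul_le_mul_of_nonneg_left (h₁.1.abs_leftLim_sub_leftLim_le h₂.1 fun w hw => ?_) hM)
  rcases le_or_gt w x with hwx | hwx
  · rw [hx hwx, sub_self, abs_zero]
    exact hd
  · exact hbound w ⟨hwx, hw.trans_le hut.2.2⟩

theorem eqOn_Iic_of_mul_measureReal_Ioo_lt_one (H : VolterraSetting τ m₁ L ν s)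
    [IsFiniteMeasure ν] {b x y : ℝ} (h₁ : IsPartialSolution ν s b Γ₁)
    (h₂ : IsPartialSolution ν s b Γ₂) (hx : EqOn Γ₁ Γ₂ (Iic x)) (hxy : x < y) (hyb : y ≤ b)
    (hq : L / m₁ ^ 2 * ν.real (Ioo x y) < 1) : EqOn Γ₁ Γ₂ (Iic y) := by
  set q := L / m₁ ^ 2 * ν.real (Ioo x y)
  have hq₀ : 0 ≤ q := mul_nonneg H.lipschitz_div_sq_nonneg measureReal_nonneg
  have hcontract : ∀ d, 0 ≤ d → (∀ v ∈ Ioo x y, |Γ₁ v - Γ₂ v| ≤ d) →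
      ∀ v ∈ Ioo x y, |Γ₁ v - Γ₂ v| ≤ q * d := by
    intro d hd hbound v hv
    rw [h₁.apply_eq (hv.2.le.trans hyb), h₂.apply_eq (hv.2.le.trans hyb)]
    refine (H.abs_volterraOp_sub_le h₁.1 h₂.1 hx hd
      fun w hw => hbound w ⟨hw.1, hw.2.trans hv.2⟩).trans ?_
    calc L / m₁ ^ 2 * d * ν.real (Ioc x v) ≤ L / m₁ ^ 2 * d * ν.real (Ioo x y) :=
          mul_le_mul_of_nonneg_left (measureReal_mono (Ioc_subset_Ioo_right hv.2))
            (mul_nonneg H.lipschitz_div_sq_nonneg hd)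
      _ = q * d := by ring
  set d₀ := Γ₁ y + Γ₂ y
  have hd₀ : 0 ≤ d₀ := add_nonneg (h₁.1.nonneg y) (h₂.1.nonneg y)
  have hgeom : ∀ k : ℕ, ∀ v ∈ Ioo x y, |Γ₁ v - Γ₂ v| ≤ q ^ k * d₀ := by
    intro k
    induction k with
    | zero => simpa using fun v (hv : v ∈ Ioo x y) => h₁.1.abs_sub_le h₂.1 hv.2.le
    | succ k ih =>
      simpa only [pow_succ, mul_comm _ q, mul_assoc] using
        hcontract _ (mul_nonneg (pow_nonneg hq₀ k) hd₀) ih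
  have hIoo : EqOn Γ₁ Γ₂ (Ioo x y) := fun v hv => by
    have := le_of_tendsto_of_tendsto' tendsto_const_nhds
      ((tendsto_pow_atTop_nhds_zero_of_lt_one hq₀ hq).mul_const d₀) fun k => hgeom k v hv
    rwa [zero_mul, abs_nonpos_iff, sub_eq_zero] at this
  have hIio : EqOn Γ₁ Γ₂ (Iio y) := fun u hu =>
    (le_or_gt u x).elim (fun h => hx h) fun h => hIoo ⟨h, hu⟩
  intro u hu
  obtain hu | rfl := (show u ≤ y from hu).lt_or_eq
  · exact hIio hu
  · exact h₁.eq_of_eqOn_Iio h₂ hyb hIio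

theorem eqOn_Iic_of_isPartialSolution (H : VolterraSetting τ m₁ L ν s) [IsFiniteMeasure ν]
    {b : ℝ} (h₁ : IsPartialSolution ν s b Γ₁) (h₂ : IsPartialSolution ν s b Γ₂) :
    EqOn Γ₁ Γ₂ (Iic b) := by
  refine induction_of_mul_measureReal_Ioo_lt_one ν H.lipschitz_div_sq_nonneg
    (a := min b 0 - 1) (by linarith [min_le_left b 0]) (fun u hu => ?_)
    fun x y _ hxy hyb hq hx => H.eqOn_Iic_of_mul_measureReal_Ioo_lt_one h₁ h₂ hx hxy hyb hq
  have hu : u < 0 := by linarith [min_le_right b 0, show u ≤ min b 0 - 1 from hu]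
  rw [h₁.1.2 u hu, h₂.1.2 u hu]

end VolterraSetting

theorem exists_tendsto_of_dist_le_geometric {α E : Type*} [PseudoMetricSpace E] [CompleteSpace E]
    {f : ℕ → α → E} {C r : ℝ} (hr : r < 1) (hf : ∀ k t, dist (f k t) (f (k + 1) t) ≤ C * r ^ k) :
    ∃ g : α → E, ∀ t, Tendsto (fun k => f k t) atTop (𝓝 (g t)) ∧
      ∀ k, dist (f k t) (g t) ≤ C * r ^ k / (1 - r) := by
  choose g hg using fun t =>
    cauchySeq_tendsto_of_complete (cauchySeq_of_le_geometric r C hr (hf · t))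
  exact ⟨g, fun t => ⟨hg t, dist_le_of_le_geometric_of_tendsto r C hr (hf · t) (hg t)⟩⟩

/-- Freezing the iterate after `y` makes its distance to another one everywhere controlled by
their distance on `(x, y)`, the only place where the map contracts. -/
noncomputable def picardStep (ν : Measure ℝ) (s : ℝ → ℝ → ℝ) (Γ : ℝ → ℝ) (x y : ℝ)
    (ψ : ℝ → ℝ) (t : ℝ) : ℝ :=
  if t ≤ x then Γ t else volterraOp ν s ψ (min t y)

noncomputable def picardIter (ν : Measure ℝ) (s : ℝ → ℝ → ℝ) (Γ : ℝ → ℝ) (x y : ℝ) (k : ℕ) :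
    ℝ → ℝ :=
  (picardStep ν s Γ x y)^[k] fun t => Γ (min t x)

theorem picardIter_succ (ν : Measure ℝ) (s : ℝ → ℝ → ℝ) (Γ : ℝ → ℝ) (x y : ℝ) (k : ℕ) (t : ℝ) :
    picardIter ν s Γ x y (k + 1) t = picardStep ν s Γ x y (picardIter ν s Γ x y k) t :=
  congrFun (Function.iterate_succ_apply' _ k _) t

def picardDomain (Γ : ℝ → ℝ) (x : ℝ) : Set (ℝ → ℝ) :=
  {ψ | MonotoneFromZero ψ ∧ EqOn ψ Γ (Iic x)}

theorem mem_picardDomain_of_tendsto {Γ Φ : ℝ → ℝ} {x : ℝ} {p : ℕ → ℝ → ℝ}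
    (hp : ∀ k, p k ∈ picardDomain Γ x) (hlim : ∀ t, Tendsto (fun k => p k t) atTop (𝓝 (Φ t))) :
    Φ ∈ picardDomain Γ x :=
  ⟨⟨fun _ _ ht => le_of_tendsto_of_tendsto' (hlim _) (hlim _) fun k => (hp k).1.1 ht,
      fun t ht => tendsto_nhds_unique (hlim t)
        (tendsto_const_nhds.congr fun k => ((hp k).1.2 t ht).symm)⟩,
    fun t ht => tendsto_nhds_unique (hlim t) (tendsto_const_nhds.congr fun k => ((hp k).2 ht).symm)⟩

theorem IsPartialSolution.of_picardStep_eq {ν : Measure ℝ} {s : ℝ → ℝ → ℝ} {Γ Φ : ℝ → ℝ}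
    {x y : ℝ} (hΓ : IsPartialSolution ν s x Γ) (hΦ : Φ ∈ picardDomain Γ x)
    (hfix : picardStep ν s Γ x y Φ = Φ) : IsPartialSolution ν s y Φ := by
  refine ⟨hΦ.1, fun t ht => ?_⟩
  conv_lhs => rw [← hfix]
  unfold picardStep
  split_ifs with htx
  · rw [hΓ.apply_eq htx]
    exact volterraOp_congr hΓ.1.1 hΦ.1.1 fun w hw => (hΦ.2 (hw.le.trans htx)).symm
  · rw [min_eq_left ht.2]

namespace VolterraSetting

variable {τ m₁ L : ℝ} {ν : Measure ℝ} {s : ℝ → ℝ → ℝ} {ψ₁ ψ₂ Γ : ℝ → ℝ} {x y : ℝ}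

theorem mapsTo_picardStep (H : VolterraSetting τ m₁ L ν s) [IsFiniteMeasure ν]
    (hΓ : IsPartialSolution ν s x Γ) (hxy : x ≤ y) :
    MapsTo (picardStep ν s Γ x y) (picardDomain Γ x) (picardDomain Γ x) := by
  intro ψ hψ
  have hx : Γ x = volterraOp ν s ψ x := (hΓ.apply_eq le_rfl).trans
    (volterraOp_congr hΓ.1.1 hψ.1.1 fun w hw => (hψ.2 (show w ≤ x from hw.le)).symm)
  refine ⟨⟨fun t₁ t₂ ht => ?_, fun t ht => ?_⟩, fun t ht => if_pos ht⟩
  · unfold picardStep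
    split_ifs with h₁ h₂ h₂
    · exact hΓ.1.1 ht
    · calc Γ t₁ ≤ Γ x := hΓ.1.1 h₁
        _ = volterraOp ν s ψ x := hx
        _ ≤ volterraOp ν s ψ (min t₂ y) := H.monotone_volterraOp hψ.1 (le_min (not_le.1 h₂).le hxy)
    · exact absurd (ht.trans h₂) h₁
    · exact H.monotone_volterraOp hψ.1 (min_le_min_right y ht)
  · unfold picardStep
    split_ifs
    · exact hΓ.1.2 t ht
    · exact volterraOp_of_neg ((min_le_left t y).trans_lt ht)

theorem abs_picardStep_sub_le (H : VolterraSetting τ m₁ L ν s) [IsFiniteMeasure ν]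
    (h₁ : ψ₁ ∈ picardDomain Γ x) (h₂ : ψ₂ ∈ picardDomain Γ x) {d : ℝ} (hd : 0 ≤ d)
    (hbound : ∀ v ∈ Ioo x y, |ψ₁ v - ψ₂ v| ≤ d) (t : ℝ) :
    |picardStep ν s Γ x y ψ₁ t - picardStep ν s Γ x y ψ₂ t| ≤
      L / m₁ ^ 2 * d * ν.real (Ioc x (min t y)) := by
  unfold picardStep
  split_ifs
  · rw [sub_self, abs_zero]
    exact mul_nonneg (mul_nonneg H.lipschitz_div_sq_nonneg hd) measureReal_nonneg
  · exact H.abs_volterraOp_sub_le h₁.1 h₂.1 (h₁.2.trans h₂.2.symm) hd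
      fun v hv => hbound v ⟨hv.1, hv.2.trans_le (min_le_right t y)⟩

theorem tendsto_picardStep (H : VolterraSetting τ m₁ L ν s) [IsFiniteMeasure ν]
    {f : ℕ → ℝ → ℝ} {Φ : ℝ → ℝ} {ε : ℕ → ℝ} (hf : ∀ k, f k ∈ picardDomain Γ x)
    (hΦ : Φ ∈ picardDomain Γ x) (hfε : ∀ k v, |f k v - Φ v| ≤ ε k)
    (hε : Tendsto ε atTop (𝓝 0)) (t : ℝ) :
    Tendsto (fun k => picardStep ν s Γ x y (f k) t) atTop (𝓝 (picardStep ν s Γ x y Φ t)) := by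
  rw [tendsto_iff_dist_tendsto_zero]
  refine squeeze_zero (fun _ => dist_nonneg) (fun k => ?_)
    (by simpa using (hε.const_mul (L / m₁ ^ 2)).mul_const (ν.real univ))
  have hεk : 0 ≤ ε k := (abs_nonneg _).trans (hfε k 0)
  rw [Real.dist_eq]
  refine (H.abs_picardStep_sub_le (hf k) hΦ hεk (fun v _ => hfε k v) t).trans ?_
  exact mul_le_mul_of_nonneg_left (measureReal_mono (subset_univ _))
    (mul_nonneg H.lipschitz_div_sq_nonneg hεk)

theorem picardIter_mem (H : VolterraSetting τ m₁ L ν s) [IsFiniteMeasure ν]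
    (hΓ : IsPartialSolution ν s x Γ) (hxy : x ≤ y) (k : ℕ) :
    picardIter ν s Γ x y k ∈ picardDomain Γ x :=
  (H.mapsTo_picardStep hΓ hxy).iterate k
    ⟨⟨hΓ.1.1.comp (monotone_id.min monotone_const),
      fun t ht => hΓ.1.2 _ ((min_le_left t x).trans_lt ht)⟩,
      fun t ht => by simp only [min_eq_left (show t ≤ x from ht)]⟩

theorem abs_picardIter_succ_sub_le (H : VolterraSetting τ m₁ L ν s) [IsFiniteMeasure ν]
    (hΓ : IsPartialSolution ν s x Γ) (hxy : x ≤ y) (k : ℕ) {v : ℝ} (hv : v ∈ Ioo x y) :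
    |picardIter ν s Γ x y (k + 1) v - picardIter ν s Γ x y k v| ≤
      (picardIter ν s Γ x y 1 y + picardIter ν s Γ x y 0 y) *
        (L / m₁ ^ 2 * ν.real (Ioo x y)) ^ k := by
  have hp := H.picardIter_mem hΓ hxy
  have hM := H.lipschitz_div_sq_nonneg
  have hd₀ := add_nonneg ((hp 1).1.nonneg y) ((hp 0).1.nonneg y)
  induction k generalizing v with
  | zero => simpa using (hp 1).1.abs_sub_le (hp 0).1 hv.2.le
  | succ k ih =>
    rw [picardIter_succ, picardIter_succ ν s Γ x y k]
    refine (H.abs_picardStep_sub_le (hp (k + 1)) (hp k) (by positivity) (fun w hw => ih hw)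
      v).trans ?_
    rw [min_eq_left hv.2.le, pow_succ]
    calc _ ≤ _ * ν.real (Ioo x y) :=
          mul_le_mul_of_nonneg_left (measureReal_mono (Ioc_subset_Ioo_right hv.2))
            (by positivity)
      _ = _ := by ring

theorem exists_dist_picardIter_le_geometric (H : VolterraSetting τ m₁ L ν s)
    [IsFiniteMeasure ν] (hΓ : IsPartialSolution ν s x Γ) (hxy : x ≤ y) :
    ∃ C, ∀ k t, dist (picardIter ν s Γ x y (k + 1) t) (picardIter ν s Γ x y (k + 1 + 1) t) ≤
      C * (L / m₁ ^ 2 * ν.real (Ioo x y)) ^ k := by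
  have hp := H.picardIter_mem hΓ hxy
  have hM := H.lipschitz_div_sq_nonneg
  have hd₀ := add_nonneg ((hp 1).1.nonneg y) ((hp 0).1.nonneg y)
  refine ⟨L / m₁ ^ 2 * (picardIter ν s Γ x y 1 y + picardIter ν s Γ x y 0 y) * ν.real univ,
    fun k t => ?_⟩
  rw [dist_comm, Real.dist_eq, picardIter_succ, picardIter_succ ν s Γ x y k]
  refine (H.abs_picardStep_sub_le (hp (k + 1)) (hp k) (by positivity)
    (fun v hv => H.abs_picardIter_succ_sub_le hΓ hxy k hv) t).trans ?_
  calc _ ≤ _ * ν.real univ :=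
        mul_le_mul_of_nonneg_left (measureReal_mono (subset_univ _)) (by positivity)
    _ = _ := by ring

theorem exists_picardStep_eq (H : VolterraSetting τ m₁ L ν s) [IsFiniteMeasure ν]
    (hΓ : IsPartialSolution ν s x Γ) (hxy : x ≤ y) (hq : L / m₁ ^ 2 * ν.real (Ioo x y) < 1) :
    ∃ Φ ∈ picardDomain Γ x, picardStep ν s Γ x y Φ = Φ := by
  have hq₀ : 0 ≤ L / m₁ ^ 2 * ν.real (Ioo x y) :=
    mul_nonneg H.lipschitz_div_sq_nonneg measureReal_nonneg
  have hp := H.picardIter_mem hΓ hxy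
  obtain ⟨C, hC⟩ := H.exists_dist_picardIter_le_geometric hΓ hxy
  obtain ⟨Φ, hΦ⟩ := exists_tendsto_of_dist_le_geometric hq hC
  have hΦmem : Φ ∈ picardDomain Γ x :=
    mem_picardDomain_of_tendsto (fun k => hp (k + 1)) fun t => (hΦ t).1
  refine ⟨Φ, hΦmem, funext fun t => tendsto_nhds_unique
    (H.tendsto_picardStep (fun k => hp (k + 1)) hΦmem
      (fun k v => by rw [← Real.dist_eq]; exact (hΦ v).2 k)
      (by simpa using ((tendsto_pow_atTop_nhds_zero_of_lt_one hq₀ hq).const_mul C).div_const _) t)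
    (((hΦ t).1.comp (tendsto_add_atTop_nat 1)).congr fun k => picardIter_succ ν s Γ x y _ t)⟩

theorem exists_isPartialSolution (H : VolterraSetting τ m₁ L ν s) [IsFiniteMeasure ν] (b : ℝ) :
    ∃ Γ, IsPartialSolution ν s b Γ := by
  refine induction_of_mul_measureReal_Ioo_lt_one ν H.lipschitz_div_sq_nonneg
    (P := fun b => ∃ Γ, IsPartialSolution ν s b Γ) (a := min b 0 - 1)
    (by linarith [min_le_left b 0])
    ⟨0, .zero_of_neg (by linarith [min_le_right b 0])⟩ fun x y _ hxy _ hq ⟨Γ, hΓ⟩ => ?_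
  obtain ⟨Φ, hΦ, hfix⟩ := H.exists_picardStep_eq hΓ hxy.le hq
  exact ⟨Φ, hΓ.of_picardStep_eq hΦ hfix⟩

theorem isVolterraSolution (H : VolterraSetting τ m₁ L ν s) [IsFiniteMeasure ν]
    (hΓ : IsPartialSolution ν s τ Γ) : IsVolterraSolution τ ν s Γ := by
  refine ⟨hΓ.1.1, hΓ.1.2, fun t ht => ?_, hΓ.2⟩
  refine (H.continuousWithinAt_volterraOp hΓ.1 ht.1).congr_of_eventuallyEq ?_
    (hΓ.2 t ⟨ht.1, ht.2.le⟩)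
  filter_upwards [self_mem_nhdsWithin, nhdsWithin_le_nhds (Iio_mem_nhds ht.2)] with u hu hu'
  exact hΓ.2 u ⟨ht.1.trans hu, hu'.le⟩

end VolterraSetting

theorem IsVolterraSolution.isPartialSolution {τ : ℝ} {ν : Measure ℝ} {s : ℝ → ℝ → ℝ}
    {Γ : ℝ → ℝ} (h : IsVolterraSolution τ ν s Γ) : IsPartialSolution ν s τ Γ :=
  ⟨⟨h.1, h.2.1⟩, h.2.2.2⟩

theorem stmt_17_general (τ m₁ m₂ L : ℝ) (hτ : 0 ≤ τ) (hm₁ : 0 < m₁) (hL : 0 ≤ L)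
    (ν : Measure ℝ) [IsFiniteMeasure ν] (hν : ν (Icc 0 τ)ᶜ = 0)
    (s : ℝ → ℝ → ℝ) (hs_meas : Measurable (Function.uncurry s))
    (hs_range : ∀ x ∈ Ici (0:ℝ), ∀ u ∈ Icc 0 τ, s x u ∈ Icc m₁ m₂)
    (hs_lip : ∀ x ∈ Ici (0:ℝ), ∀ x' ∈ Ici (0:ℝ), ∀ u ∈ Icc 0 τ,
      |s x u - s x' u| ≤ L * |x - x'|) :
    (∃ Γ : ℝ → ℝ, IsVolterraSolution τ ν s Γ ∧
      (∀ t ∈ Icc 0 τ, 0 ≤ Γ t) ∧ Γ τ ≤ (ν (Icc 0 τ)).toReal / m₁) ∧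
    ∀ Γ₁ Γ₂ : ℝ → ℝ, IsVolterraSolution τ ν s Γ₁ → IsVolterraSolution τ ν s Γ₂ →
      ∀ t ∈ Icc 0 τ, Γ₁ t = Γ₂ t := by
  have H : VolterraSetting τ m₁ L ν s :=
    ⟨hm₁, hL, mem_ae_iff.2 hν, hs_meas, fun x hx u hu => (hs_range x hx u hu).1, hs_lip⟩
  obtain ⟨Γ, hΓ⟩ := H.exists_isPartialSolution τ
  refine ⟨⟨Γ, H.isVolterraSolution hΓ, fun t _ => hΓ.1.nonneg t, ?_⟩,
    fun Γ₁ Γ₂ h₁ h₂ t ht => H.eqOn_Iic_of_isPartialSolution h₁.isPartialSolution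
      h₂.isPartialSolution ht.2⟩
  rw [hΓ.2 τ ⟨hτ, le_rfl⟩, ← measureReal_def]
  exact H.volterraOp_le hΓ.1 τ

/-- Let `ν` be a finite Borel measure on `[0,τ]`, let
`0 < m₁ ≤ m₂ < ∞` and `L ≥ 0`, and let `s : [0,∞) × [0,τ] → [m₁, m₂]` be measurable
and satisfy `|s(x,u) − s(x',u)| ≤ L|x − x'|`. Then there exists exactly one
nondecreasing right-continuous function `Γ : [0,τ] → [0,∞)` with left limits (with
`Γ(0−) := 0`) satisfying the Volterra integral equation
`Γ(t) = ∫_{[0,t]} ν(du) / s(Γ(u−), u)` for all `t ∈ [0,τ]`; moreover `Γ` is bounded,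
with `Γ(τ) ≤ ν([0,τ])/m₁`. -/
theorem stmt_17 (τ m₁ m₂ L : ℝ) (hτ : 0 ≤ τ) (hm₁ : 0 < m₁) (hm : m₁ ≤ m₂) (hL : 0 ≤ L)
    (ν : Measure ℝ) [IsFiniteMeasure ν] (hν : ν (Icc 0 τ)ᶜ = 0)
    (s : ℝ → ℝ → ℝ) (hs_meas : Measurable (Function.uncurry s))
    (hs_range : ∀ x ∈ Ici (0:ℝ), ∀ u ∈ Icc 0 τ, s x u ∈ Icc m₁ m₂)
    (hs_lip : ∀ x ∈ Ici (0:ℝ), ∀ x' ∈ Ici (0:ℝ), ∀ u ∈ Icc 0 τ,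
      |s x u - s x' u| ≤ L * |x - x'|) :
    (∃ Γ : ℝ → ℝ, IsVolterraSolution τ ν s Γ ∧
      (∀ t ∈ Icc 0 τ, 0 ≤ Γ t) ∧ Γ τ ≤ (ν (Icc 0 τ)).toReal / m₁) ∧
    ∀ Γ₁ Γ₂ : ℝ → ℝ, IsVolterraSolution τ ν s Γ₁ → IsVolterraSolution τ ν s Γ₂ →
      ∀ t ∈ Icc 0 τ, Γ₁ t = Γ₂ t :=
  stmt_17_general τ m₁ m₂ L hτ hm₁ hL ν hν s hs_meas hs_range hs_lip
end
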